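/- arXiv:1701.03892 — 8 statements merged into one kernel-verified Lean document; each statement's English description precedes it below -/
import Mathlib

section
/- Theorem 2.1 (sufficiency): Let p : ℕ → ℝ with p_i ≥ 0 and Σ_{i=0}^∞ p_i = 1 be a DPCP distribution, i.e. there exist λ > 0 and a real sequence (α_k)_{k≥1} with Σ_{k≥1} α_k = 1 and Σ_{k≥1} |α_k| < ∞ such that Σ_{i=0}^∞ p_i z^i = exp(λ Σ_{k≥1} α_k (z^k − 1)) for all complex z with |z| ≤ 1. Then p is signed discrete infinitely divisible: for every integer n ≥ 1 there exists q^{(n)} : ℕ → ℝ with Σ_i q^{(n)}_i = 1 and Σ_i |q^{(n)}_i| < ∞ such that (Σ_{i=0}^∞ q^{(n)}_i z^i)^n = Σ_{i=0}^∞ p_i z^i for all complex z with |z| ≤ 1. -/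
/-!
The logarithm `λ ∑ α_k (z^k - 1)` of the p.g.f. is a power series with absolutely summable
coefficients, and so is its `n`-th part. Absolutely summable coefficient sequences are closed under
exponentiation: the `ℓ¹` norm of the coefficients is submultiplicative by the Cauchy product, so
`∑ ψ^m / m!` converges absolutely as a double series and may be summed in either order. Taking
`q` with p.g.f. `exp ((λ / n) ∑ α_k (z^k - 1))` gives `Q^n = P`, and `Q(1) = exp 0 = 1`.
-/

open PowerSeries

theorem summable_norm_inv_factorial_mul_pow {𝕜 : Type*} [RCLike 𝕜] (C : ℝ) :
    Summable fun m => ‖(m.factorial : 𝕜)⁻¹‖ * C ^ m := by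
  simpa [norm_inv, div_eq_inv_mul] using Real.summable_pow_div_factorial C

namespace PowerSeries

section NormedCoeff

variable {R : Type*} [NormedCommRing R] {φ ψ : R⟦X⟧}

theorem summable_norm_coeff_mul (hφ : Summable fun i => ‖coeff i φ‖)
    (hψ : Summable fun i => ‖coeff i ψ‖) : Summable fun i => ‖coeff i (φ * ψ)‖ := by
  simpa only [coeff_mul] using summable_norm_sum_mul_antidiagonal_of_summable_norm hφ hψ

theorem tsum_norm_coeff_mul_le (hφ : Summable fun i => ‖coeff i φ‖)
    (hψ : Summable fun i => ‖coeff i ψ‖) :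
    ∑' i, ‖coeff i (φ * ψ)‖ ≤ (∑' i, ‖coeff i φ‖) * ∑' i, ‖coeff i ψ‖ := by
  have hφ' : Summable fun i => ‖‖coeff i φ‖‖ := by simpa only [norm_norm] using hφ
  have hψ' : Summable fun i => ‖‖coeff i ψ‖‖ := by simpa only [norm_norm] using hψ
  rw [tsum_mul_tsum_eq_tsum_sum_antidiagonal_of_summable_norm hφ' hψ']
  refine (summable_norm_coeff_mul hφ hψ).tsum_le_tsum (fun i => ?_)
    (summable_norm_sum_mul_antidiagonal_of_summable_norm hφ' hψ').of_norm
  rw [coeff_mul]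
  exact (norm_sum_le _ _).trans (Finset.sum_le_sum fun _ _ => norm_mul_le _ _)

theorem tsum_coeff_mul [CompleteSpace R] (hφ : Summable fun i => ‖coeff i φ‖)
    (hψ : Summable fun i => ‖coeff i ψ‖) :
    ∑' i, coeff i (φ * ψ) = (∑' i, coeff i φ) * ∑' i, coeff i ψ := by
  simp only [coeff_mul]
  exact (tsum_mul_tsum_eq_tsum_sum_antidiagonal_of_summable_norm hφ hψ).symm

theorem summable_norm_coeff_pow (hφ : Summable fun i => ‖coeff i φ‖) (m : ℕ) :
    Summable fun i => ‖coeff i (φ ^ m)‖ := by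
  induction m with
  | zero => exact summable_of_ne_finset_zero (s := {0}) fun i hi => by simp_all [coeff_one]
  | succ m ih => rw [pow_succ]; exact summable_norm_coeff_mul ih hφ

theorem tsum_coeff_pow [CompleteSpace R] (hφ : Summable fun i => ‖coeff i φ‖) (m : ℕ) :
    ∑' i, coeff i (φ ^ m) = (∑' i, coeff i φ) ^ m := by
  induction m with
  | zero => rw [tsum_eq_single 0 fun i hi => by simp [coeff_one, hi]]; simp
  | succ m ih => rw [pow_succ, pow_succ, tsum_coeff_mul (summable_norm_coeff_pow hφ m) hφ, ih]

variable [NormOneClass R]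

theorem tsum_norm_coeff_pow_le (hφ : Summable fun i => ‖coeff i φ‖) (m : ℕ) :
    ∑' i, ‖coeff i (φ ^ m)‖ ≤ (∑' i, ‖coeff i φ‖) ^ m := by
  induction m with
  | zero => rw [tsum_eq_single 0 fun i hi => by simp [coeff_one, hi]]; simp
  | succ m ih =>
    rw [pow_succ, pow_succ]
    exact (tsum_norm_coeff_mul_le (summable_norm_coeff_pow hφ m) hφ).trans
      (mul_le_mul_of_nonneg_right ih (tsum_nonneg fun _ => norm_nonneg _))

variable {c : ℕ → R}

theorem summable_norm_mul_coeff_pow (hφ : Summable fun i => ‖coeff i φ‖)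
    (hc : Summable fun m => ‖c m‖ * (∑' i, ‖coeff i φ‖) ^ m) :
    Summable fun x : ℕ × ℕ => ‖c x.1 * coeff x.2 (φ ^ x.1)‖ := by
  have hrow (m : ℕ) : Summable fun i => ‖c m‖ * ‖coeff i (φ ^ m)‖ :=
    (summable_norm_coeff_pow hφ m).mul_left _
  have hrow' (m : ℕ) : Summable fun i => ‖c m * coeff i (φ ^ m)‖ :=
    (hrow m).of_nonneg_of_le (fun _ => norm_nonneg _) fun _ => norm_mul_le _ _
  refine (summable_prod_of_nonneg fun _ => norm_nonneg _).2 ⟨hrow', ?_⟩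
  refine hc.of_nonneg_of_le (fun _ => tsum_nonneg fun _ => norm_nonneg _) fun m => ?_
  calc ∑' i, ‖c m * coeff i (φ ^ m)‖ ≤ ∑' i, ‖c m‖ * ‖coeff i (φ ^ m)‖ :=
        (hrow' m).tsum_le_tsum (fun _ => norm_mul_le _ _) (hrow m)
    _ = ‖c m‖ * ∑' i, ‖coeff i (φ ^ m)‖ := tsum_mul_left
    _ ≤ ‖c m‖ * (∑' i, ‖coeff i φ‖) ^ m :=
        mul_le_mul_of_nonneg_left (tsum_norm_coeff_pow_le hφ m) (norm_nonneg _)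

theorem summable_norm_tsum_mul_coeff_pow (hφ : Summable fun i => ‖coeff i φ‖)
    (hc : Summable fun m => ‖c m‖ * (∑' i, ‖coeff i φ‖) ^ m) :
    Summable fun i => ‖∑' m, c m * coeff i (φ ^ m)‖ := by
  have h := (summable_norm_mul_coeff_pow hφ hc).prod_symm
  exact h.prod.of_nonneg_of_le (fun _ => norm_nonneg _) fun i =>
    norm_tsum_le_tsum_norm (h.prod_factor i)

theorem tsum_tsum_mul_coeff_pow [CompleteSpace R] (hφ : Summable fun i => ‖coeff i φ‖)
    (hc : Summable fun m => ‖c m‖ * (∑' i, ‖coeff i φ‖) ^ m) :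
    ∑' i, ∑' m, c m * coeff i (φ ^ m) = ∑' m, c m * (∑' i, coeff i φ) ^ m := by
  have h : Summable (Function.uncurry fun m i => c m * coeff i (φ ^ m)) :=
    (summable_norm_mul_coeff_pow hφ hc).of_norm
  rw [h.tsum_comm]
  exact tsum_congr fun m => by
    rw [(summable_norm_coeff_pow hφ m).of_norm.tsum_mul_left, tsum_coeff_pow hφ]

end NormedCoeff

theorem tsum_tsum_inv_factorial_mul_coeff_pow {ψ : ℂ⟦X⟧}
    (hψ : Summable fun i => ‖coeff i ψ‖) :
    ∑' i, ∑' m, (m.factorial : ℂ)⁻¹ * coeff i (ψ ^ m) = Complex.exp (∑' i, coeff i ψ) := by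
  rw [tsum_tsum_mul_coeff_pow hψ (summable_norm_inv_factorial_mul_pow _), Complex.exp_eq_exp_ℂ,
    NormedSpace.exp_eq_tsum_div]
  simp only [div_eq_inv_mul]

end PowerSeries

theorem summable_norm_ofReal_mul_pow {a : ℕ → ℝ} (ha : Summable fun k => |a k|) {z : ℂ}
    (hz : ‖z‖ ≤ 1) : Summable fun k => ‖(a k : ℂ) * z ^ k‖ :=
  ha.of_nonneg_of_le (fun _ => norm_nonneg _) fun k => by
    rw [norm_mul, Complex.norm_real, Real.norm_eq_abs, norm_pow]
    exact mul_le_of_le_one_right (abs_nonneg _) (pow_le_one₀ (norm_nonneg _) hz)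

theorem exists_summable_abs_tsum_mul_pow_eq_exp (a : ℕ → ℝ) (ha : Summable fun k => |a k|) :
    ∃ q : ℕ → ℝ, Summable (fun i => |q i|) ∧
      ∀ z : ℂ, ‖z‖ ≤ 1 → ∑' i, (q i : ℂ) * z ^ i = Complex.exp (∑' k, (a k : ℂ) * z ^ k) := by
  have hφ : Summable fun i => ‖coeff i (mk a)‖ := by simpa only [coeff_mk, Real.norm_eq_abs] using ha
  have hq : Summable fun i => |∑' m, (m.factorial : ℝ)⁻¹ * coeff i (mk a ^ m)| := by
    simpa only [Real.norm_eq_abs] using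
      summable_norm_tsum_mul_coeff_pow hφ (summable_norm_inv_factorial_mul_pow (𝕜 := ℝ) _)
  refine ⟨_, hq, fun z hz => ?_⟩
  -- summing the coefficients of `rescale z φ` evaluates `φ` at `z`
  have hψ (m i : ℕ) : coeff i (rescale z (map Complex.ofRealHom (mk a)) ^ m) =
      ((coeff i (mk a ^ m) : ℝ) : ℂ) * z ^ i := by
    simp [← map_pow, coeff_rescale, coeff_map, mul_comm]
  have hψ₁ (i : ℕ) : coeff i (rescale z (map Complex.ofRealHom (mk a))) = (a i : ℂ) * z ^ i := by
    simpa using hψ 1 i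
  rw [← tsum_congr hψ₁, ← tsum_tsum_inv_factorial_mul_coeff_pow]
  · refine tsum_congr fun i => ?_
    rw [Complex.ofReal_tsum, ← tsum_mul_right]
    refine tsum_congr fun m => ?_
    rw [hψ]
    push_cast
    ring
  · simpa only [hψ₁] using summable_norm_ofReal_mul_pow ha hz

/-- The coefficients of `lam * ∑' k, α k * (z ^ (k + 1) - 1)` as a power series in `z`. -/
noncomputable def logPgfCoeff (lam : ℝ) (α : ℕ → ℝ) : ℕ → ℝ
  | 0 => -(lam * ∑' k, α k)
  | k + 1 => lam * α k

theorem summable_abs_logPgfCoeff (lam : ℝ) {α : ℕ → ℝ} (hα : Summable fun k => |α k|) :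
    Summable fun k => |logPgfCoeff lam α k| := by
  rw [← summable_nat_add_iff 1]
  simpa only [logPgfCoeff, abs_mul] using hα.mul_left |lam|

theorem tsum_logPgfCoeff_mul_pow (lam : ℝ) {α : ℕ → ℝ} (hα : Summable fun k => |α k|) {z : ℂ}
    (hz : ‖z‖ ≤ 1) :
    ∑' k, (logPgfCoeff lam α k : ℂ) * z ^ k = lam * ∑' k, (α k : ℂ) * (z ^ (k + 1) - 1) := by
  have hαz : Summable fun k => (α k : ℂ) * z ^ (k + 1) := by
    simpa only [pow_succ, mul_assoc] using (summable_norm_ofReal_mul_pow hα hz).of_norm.mul_right z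
  have hαc : Summable fun k => (α k : ℂ) := Complex.summable_ofReal.2 hα.of_abs
  rw [(summable_norm_ofReal_mul_pow (summable_abs_logPgfCoeff lam hα) hz).of_norm.tsum_eq_zero_add]
  simp only [logPgfCoeff, mul_sub, mul_one]
  rw [hαz.tsum_sub hαc]
  push_cast
  simp only [mul_assoc, tsum_mul_left]
  ring

theorem dpcp_implies_signed_discrete_infinitely_divisible_general
    (p : ℕ → ℝ) (lam : ℝ) (α : ℕ → ℝ)
    (hαabs : Summable (fun k => |α k|))
    (hDPCP : ∀ z : ℂ, ‖z‖ ≤ 1 →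
      (∑' i, (p i : ℂ) * z ^ i) =
        Complex.exp ((lam : ℂ) * ∑' k, (α k : ℂ) * (z ^ (k + 1) - 1))) :
    ∀ n : ℕ, 1 ≤ n → ∃ q : ℕ → ℝ,
      (∑' i, q i) = 1 ∧ Summable (fun i => |q i|) ∧
      ∀ z : ℂ, ‖z‖ ≤ 1 →
        (∑' i, (q i : ℂ) * z ^ i) ^ n = ∑' i, (p i : ℂ) * z ^ i := by
  intro n hn
  obtain ⟨q, hq_abs, hq⟩ :=
    exists_summable_abs_tsum_mul_pow_eq_exp _ (summable_abs_logPgfCoeff (lam / n) hαabs)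
  have hpgf (z : ℂ) (hz : ‖z‖ ≤ 1) : ∑' i, (q i : ℂ) * z ^ i =
      Complex.exp ((lam / n : ℝ) * ∑' k, (α k : ℂ) * (z ^ (k + 1) - 1)) := by
    rw [hq z hz, tsum_logPgfCoeff_mul_pow _ hαabs hz]
  refine ⟨q, ?_, hq_abs, fun z hz => ?_⟩
  · have h1 := hpgf 1 (by simp)
    simp only [one_pow, mul_one, sub_self, mul_zero, tsum_zero, Complex.exp_zero] at h1
    exact_mod_cast h1
  · rw [hpgf z hz, hDPCP z hz, ← Complex.exp_nat_mul]
    have hn0 : (n : ℂ) ≠ 0 := Nat.cast_ne_zero.2 (by omega)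
    congr 1
    push_cast
    field_simp

/-- Theorem 2.1 (sufficiency): a DPCP distribution on ℕ is signed discrete
infinitely divisible.  Here `α k` stands for `α_{k+1}` (the sequence indexed
from 1) and the p.g.f. is `z ↦ ∑' i, p i * z ^ i` on the closed unit disk. -/
theorem dpcp_implies_signed_discrete_infinitely_divisible
    (p : ℕ → ℝ) (hp : ∀ i, 0 ≤ p i) (hp1 : (∑' i, p i) = 1)
    (lam : ℝ) (hlam : 0 < lam) (α : ℕ → ℝ)
    (hα1 : (∑' k, α k) = 1) (hαabs : Summable (fun k => |α k|))
    (hDPCP : ∀ z : ℂ, ‖z‖ ≤ 1 →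
      (∑' i, (p i : ℂ) * z ^ i) =
        Complex.exp ((lam : ℂ) * ∑' k, (α k : ℂ) * (z ^ (k + 1) - 1))) :
    ∀ n : ℕ, 1 ≤ n → ∃ q : ℕ → ℝ,
      (∑' i, q i) = 1 ∧ Summable (fun i => |q i|) ∧
      ∀ z : ℂ, ‖z‖ ≤ 1 →
        (∑' i, (q i : ℂ) * z ^ i) ^ n = ∑' i, (p i : ℂ) * z ^ i :=
  dpcp_implies_signed_discrete_infinitely_divisible_general p lam α hαabs hDPCP
end

section
/- Lemma 2.5: Let p : ℕ → ℝ with p_i ≥ 0 and Σ_{i=0}^∞ p_i = 1, and let G(z) = Σ_{i=0}^∞ p_i z^i for complex |z| ≤ 1. Suppose that for every integer n ≥ 1 there exists q^{(n)} : ℕ → ℝ with Σ_i q^{(n)}_i = 1 and Σ_i |q^{(n)}_i| < ∞ such that (Σ_{i=0}^∞ q^{(n)}_i z^i)^n = G(z) for all |z| ≤ 1, and suppose sup_n Σ_i |q^{(n)}_i| < ∞ and lim_{M→∞} sup_n Σ_{i>M} |q^{(n)}_i| = 0. Then G(z) ≠ 0 for all complex z with |z| ≤ 1. -/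
/-!
If `G w = 0`, then every root `Hₙ = ∑ qᵢ⁽ⁿ⁾ zⁱ` vanishes at `w`. A uniform bound on the total
variation together with uniform tightness makes the family `(Hₙ)` uniformly equicontinuous on the
closed unit disk, so there is a `δ > 0`, independent of `n`, with `‖Hₙ z‖ < 1/2` whenever
`‖z - w‖ < δ`; then `‖G z‖ = ‖Hₙ z‖ ^ (n + 1) ≤ 2⁻⁽ⁿ⁺¹⁾ → 0`, so `G z = 0`. Hence the zero set of `G` is
open and closed in the (connected) disk, and it misses `1` because `G 1 = ∑ pᵢ = 1`.
-/

open Filter Metric Topology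

theorem norm_pow_le_one_of_norm_le_one {R : Type*} [SeminormedRing R] [NormOneClass R] {z : R}
    (hz : ‖z‖ ≤ 1) (n : ℕ) : ‖z ^ n‖ ≤ 1 :=
  (norm_pow_le z n).trans (pow_le_one₀ (norm_nonneg z) hz)

theorem norm_pow_sub_pow_le {R : Type*} [SeminormedRing R] [NormOneClass R] {z w : R}
    (hz : ‖z‖ ≤ 1) (hw : ‖w‖ ≤ 1) (n : ℕ) : ‖z ^ n - w ^ n‖ ≤ n * ‖z - w‖ := by
  induction n with
  | zero => simp
  | succ n ih =>
    have hzn := norm_pow_le_one_of_norm_le_one hz n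
    calc ‖z ^ (n + 1) - w ^ (n + 1)‖
        = ‖z ^ n * (z - w) + (z ^ n - w ^ n) * w‖ := by noncomm_ring
      _ ≤ ‖z ^ n‖ * ‖z - w‖ + ‖z ^ n - w ^ n‖ * ‖w‖ :=
        (norm_add_le _ _).trans (add_le_add (norm_mul_le _ _) (norm_mul_le _ _))
      _ ≤ 1 * ‖z - w‖ + n * ‖z - w‖ * 1 := by gcongr
      _ = (n + 1 : ℕ) * ‖z - w‖ := by push_cast; ring

theorem tsum_nat_add_le_tsum {f : ℕ → ℝ} (hf : ∀ i, 0 ≤ f i) (hsum : Summable f) (k : ℕ) :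
    ∑' i, f (i + k) ≤ ∑' i, f i := by
  rw [← hsum.sum_add_tsum_nat_add k]
  linarith [Finset.sum_nonneg fun i (_ : i ∈ Finset.range k) => hf i]

theorem exists_forall_lt_of_tendsto_iSup {ι : Type*} {f : ι → ℕ → ℝ}
    (hbdd : ∀ k, BddAbove (Set.range fun n => f n k))
    (hf : Tendsto (fun k => ⨆ n, f n k) atTop (𝓝 0)) {ε : ℝ} (hε : 0 < ε) :
    ∃ k, ∀ n, f n k < ε := by
  obtain ⟨k, hk⟩ := (hf.eventually (gt_mem_nhds hε)).exists
  exact ⟨k, fun n => (le_ciSup (hbdd k) n).trans_lt hk⟩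

theorem eq_zero_of_forall_norm_root_le {R : Type*} [NormedRing R] [NormOneClass R] {x : R}
    (u : ℕ → R) (hu : ∀ n, u n ^ (n + 1) = x) {c : ℝ} (hc : c < 1) (hle : ∀ n, ‖u n‖ ≤ c) :
    x = 0 := by
  have hc0 : 0 ≤ c := (norm_nonneg _).trans (hle 0)
  have hx : ∀ n, ‖x‖ ≤ c ^ (n + 1) := fun n =>
    calc ‖x‖ = ‖u n ^ (n + 1)‖ := by rw [hu]
      _ ≤ ‖u n‖ ^ (n + 1) := norm_pow_le _ _
      _ ≤ c ^ (n + 1) := pow_le_pow_left₀ (norm_nonneg _) (hle n) _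
  have hlim : Tendsto (fun n : ℕ => c ^ (n + 1)) atTop (𝓝 0) :=
    (tendsto_pow_atTop_nhds_zero_of_lt_one hc0 hc).comp (tendsto_add_atTop_nat 1)
  exact norm_le_zero_iff.mp (ge_of_tendsto hlim (Eventually.of_forall hx))

section PowerSeries

variable {R : Type*} [NormedRing R] [NormOneClass R] [CompleteSpace R]

theorem summable_mul_pow_of_norm_le_one {a : ℕ → R} (ha : Summable (‖a ·‖)) {z : R}
    (hz : ‖z‖ ≤ 1) : Summable fun i => a i * z ^ i :=
  ha.of_norm_bounded fun i => (norm_mul_le _ _).trans <|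
    mul_le_of_le_one_right (norm_nonneg _) (norm_pow_le_one_of_norm_le_one hz i)

/-- The first `N` terms are Lipschitz in `z`, and the rest are at most `2 ∑_{i ≥ N} ‖aᵢ‖`. -/
theorem norm_tsum_mul_pow_sub_le {a : ℕ → R} (ha : Summable (‖a ·‖)) {z w : R}
    (hz : ‖z‖ ≤ 1) (hw : ‖w‖ ≤ 1) (N : ℕ) :
    ‖∑' i, a i * z ^ i - ∑' i, a i * w ^ i‖ ≤
      N * (∑' i, ‖a i‖) * ‖z - w‖ + 2 * ∑' i, ‖a (i + N)‖ := by
  set g : ℕ → ℝ := fun i => ‖a i‖ * ‖z ^ i - w ^ i‖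
  have hg_nonneg : ∀ i, 0 ≤ g i := fun i => by positivity
  have hg_le_two : ∀ i, g i ≤ 2 * ‖a i‖ := fun i => by
    have : ‖z ^ i - w ^ i‖ ≤ 2 := by
      have := norm_sub_le (z ^ i) (w ^ i)
      linarith [norm_pow_le_one_of_norm_le_one hz i, norm_pow_le_one_of_norm_le_one hw i]
    nlinarith [norm_nonneg (a i)]
  have hg : Summable g := .of_nonneg_of_le hg_nonneg hg_le_two (ha.mul_left 2)
  have hhead : ∑ i ∈ Finset.range N, g i ≤ N * (∑' i, ‖a i‖) * ‖z - w‖ :=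
    calc ∑ i ∈ Finset.range N, g i ≤ ∑ i ∈ Finset.range N, ‖a i‖ * (N * ‖z - w‖) := by
          refine Finset.sum_le_sum fun i hi => mul_le_mul_of_nonneg_left ?_ (norm_nonneg _)
          exact (norm_pow_sub_pow_le hz hw i).trans (by gcongr; exact (Finset.mem_range.mp hi).le)
      _ = (∑ i ∈ Finset.range N, ‖a i‖) * (N * ‖z - w‖) := (Finset.sum_mul ..).symm
      _ ≤ (∑' i, ‖a i‖) * (N * ‖z - w‖) := by
          gcongr; exact ha.sum_le_tsum _ fun i _ => norm_nonneg _
      _ = N * (∑' i, ‖a i‖) * ‖z - w‖ := by ring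
  have htail : ∑' i, g (i + N) ≤ 2 * ∑' i, ‖a (i + N)‖ := by
    rw [← tsum_mul_left]
    exact Summable.tsum_le_tsum (fun i => hg_le_two _) ((summable_nat_add_iff N).mpr hg)
      (((summable_nat_add_iff N).mpr ha).mul_left 2)
  calc ‖∑' i, a i * z ^ i - ∑' i, a i * w ^ i‖ = ‖∑' i, a i * (z ^ i - w ^ i)‖ := by
        rw [← (summable_mul_pow_of_norm_le_one ha hz).tsum_sub
          (summable_mul_pow_of_norm_le_one ha hw)]
        simp only [mul_sub]
    _ ≤ ∑' i, g i := tsum_of_norm_bounded hg.hasSum fun i => norm_mul_le _ _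
    _ = ∑ i ∈ Finset.range N, g i + ∑' i, g (i + N) := (hg.sum_add_tsum_nat_add N).symm
    _ ≤ _ := add_le_add hhead htail

theorem exists_pos_forall_norm_tsum_mul_pow_sub_lt {ι : Type*} {a : ι → ℕ → R}
    (ha : ∀ n, Summable (‖a n ·‖)) {C : ℝ} (hC : ∀ n, ∑' i, ‖a n i‖ ≤ C)
    (htight : ∀ ε > 0, ∃ N, ∀ n, ∑' i, ‖a n (i + N)‖ < ε) {ε : ℝ} (hε : 0 < ε) :
    ∃ δ > 0, ∀ z w : R, ‖z‖ ≤ 1 → ‖w‖ ≤ 1 → ‖z - w‖ < δ →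
      ∀ n, ‖∑' i, a n i * z ^ i - ∑' i, a n i * w ^ i‖ < ε := by
  obtain ⟨N, hN⟩ := htight (ε / 4) (by positivity)
  set K : ℝ := N * max C 0 + 1
  have hK : 0 < K := by positivity
  refine ⟨ε / (2 * K), by positivity, fun z w hz hw hzw n => ?_⟩
  have hhead : N * (∑' i, ‖a n i‖) * ‖z - w‖ < ε / 2 :=
    calc N * (∑' i, ‖a n i‖) * ‖z - w‖ ≤ K * ‖z - w‖ := by
          gcongr
          exact le_add_of_le_of_nonneg
            (mul_le_mul_of_nonneg_left ((hC n).trans (le_max_left _ _)) N.cast_nonneg) zero_le_one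
      _ < K * (ε / (2 * K)) := by gcongr
      _ = ε / 2 := by field_simp
  linarith [norm_tsum_mul_pow_sub_le (ha n) hz hw N, hN n]

end PowerSeries

theorem signed_discrete_infinitely_divisible_pgf_ne_zero_general
    (p : ℕ → ℝ) (hp1 : (∑' i, p i) = 1)
    (Q : ℕ → ℕ → ℝ)
    (hroot : ∀ n : ℕ, (∑' i, Q n i) = 1 ∧ Summable (fun i => |Q n i|) ∧
      ∀ z : ℂ, ‖z‖ ≤ 1 →
        (∑' i, (Q n i : ℂ) * z ^ i) ^ (n + 1) = ∑' i, (p i : ℂ) * z ^ i)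
    (hbound : ∃ C : ℝ, ∀ n, (∑' i, |Q n i|) ≤ C)
    (htight : Filter.Tendsto (fun M : ℕ => ⨆ n, ∑' i, |Q n (i + M + 1)|)
      Filter.atTop (nhds 0)) :
    ∀ z : ℂ, ‖z‖ ≤ 1 → (∑' i, (p i : ℂ) * z ^ i) ≠ 0 := by
  set G : ℂ → ℂ := fun z => ∑' i, (p i : ℂ) * z ^ i
  set H : ℕ → ℂ → ℂ := fun n z => ∑' i, (Q n i : ℂ) * z ^ i
  obtain ⟨C, hC⟩ := hbound
  have hnorm : ∀ n i, ‖(Q n i : ℂ)‖ = |Q n i| := fun n i => by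
    rw [Complex.norm_real, Real.norm_eq_abs]
  have hsum n : Summable fun i => |Q n i| := (hroot n).2.1
  have hbdd M : BddAbove (Set.range fun n => ∑' i, |Q n (i + M + 1)|) :=
    ⟨C, Set.forall_mem_range.mpr fun n =>
      (tsum_nat_add_le_tsum (fun i => abs_nonneg (Q n i)) (hsum n) (M + 1)).trans (hC n)⟩
  have htight' (ε : ℝ) (hε : 0 < ε) : ∃ N, ∀ n, ∑' i, ‖(Q n (i + N) : ℂ)‖ < ε := by
    obtain ⟨M, hM⟩ := exists_forall_lt_of_tendsto_iSup hbdd htight hε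
    exact ⟨M + 1, by simpa only [hnorm, ← add_assoc] using hM⟩
  obtain ⟨δ, hδ, hclose⟩ := exists_pos_forall_norm_tsum_mul_pow_sub_lt (a := fun n i => (Q n i : ℂ))
    (by simpa only [hnorm] using hsum) (by simpa only [hnorm] using hC) htight' one_half_pos
  have hpropagate : ∀ z ∈ closedBall (0 : ℂ) 1, ∀ w ∈ closedBall (0 : ℂ) 1, ‖z - w‖ < δ →
      G w = 0 → G z = 0 := by
    intro z hz w hw hzw hGw
    rw [mem_closedBall_zero_iff] at hz hw
    have hHw n : H n w = 0 :=
      (pow_eq_zero_iff n.succ_ne_zero).mp (((hroot n).2.2 w hw).trans hGw)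
    refine eq_zero_of_forall_norm_root_le (H · z) (fun n => (hroot n).2.2 z hz) one_half_lt_one
      fun n => ?_
    have hHzw : ‖H n z - H n w‖ < 1 / 2 := hclose z w hz hw hzw n
    rw [hHw, sub_zero] at hHzw
    exact hHzw.le
  have hzero_iff : ∀ z ∈ closedBall (0 : ℂ) 1,
      ∀ᶠ w in 𝓝[closedBall 0 1] z, (G z = 0 ↔ G w = 0) := by
    intro z hz
    filter_upwards [mem_nhdsWithin_of_mem_nhds (ball_mem_nhds z hδ), self_mem_nhdsWithin]
      with w hwz hw
    rw [mem_ball_iff_norm] at hwz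
    exact ⟨hpropagate w hw z hz hwz, hpropagate z hz w hw (norm_sub_rev w z ▸ hwz)⟩
  have hG1 : G 1 = 1 := by
    simp only [G, one_pow, mul_one, ← Complex.ofReal_tsum, hp1, Complex.ofReal_one]
  intro z hz hGz
  have := (convex_closedBall (0 : ℂ) 1).isPreconnected.induction₂ (fun z w => G z = 0 ↔ G w = 0)
    hzero_iff (fun _ _ _ _ _ _ => Iff.trans) (fun _ _ _ _ => Iff.symm)
    (mem_closedBall_zero_iff.mpr hz) (mem_closedBall_zero_iff.mpr norm_one.le)
  exact one_ne_zero (hG1 ▸ this.mp hGz)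

/-- Lemma 2.5: the p.g.f. of a signed discrete infinitely divisible
distribution (whose family of signed n-th roots `Q n = q^{(n+1)}` is bounded
in variation and uniformly tight) never vanishes on the closed unit disk. -/
theorem signed_discrete_infinitely_divisible_pgf_ne_zero
    (p : ℕ → ℝ) (hp : ∀ i, 0 ≤ p i) (hp1 : (∑' i, p i) = 1)
    (Q : ℕ → ℕ → ℝ)
    (hroot : ∀ n : ℕ, (∑' i, Q n i) = 1 ∧ Summable (fun i => |Q n i|) ∧
      ∀ z : ℂ, ‖z‖ ≤ 1 →
        (∑' i, (Q n i : ℂ) * z ^ i) ^ (n + 1) = ∑' i, (p i : ℂ) * z ^ i)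
    (hbound : ∃ C : ℝ, ∀ n, (∑' i, |Q n i|) ≤ C)
    (htight : Filter.Tendsto (fun M : ℕ => ⨆ n, ∑' i, |Q n (i + M + 1)|)
      Filter.atTop (nhds 0)) :
    ∀ z : ℂ, ‖z‖ ≤ 1 → (∑' i, (p i : ℂ) * z ^ i) ≠ 0 :=
  signed_discrete_infinitely_divisible_pgf_ne_zero_general p hp1 Q hroot hbound htight
end

section
/- Lemma 2.4 (Continuity theorem for signed p.g.f.'s): Let (p^{(n)})_{n≥1} be sequences p^{(n)} : ℕ → ℝ with sup_n Σ_{k=0}^∞ |p^{(n)}_k| < ∞ and lim_{M→∞} sup_n Σ_{k>M} |p^{(n)}_k| = 0. Then there exists a sequence p : ℕ → ℝ such that lim_{n→∞} p^{(n)}_k = p_k for every k ∈ ℕ if and only if the limit lim_{n→∞} Σ_{k=0}^∞ p^{(n)}_k z^k exists for every z ∈ (0,1). Moreover, in that case Σ_{k=0}^∞ |p_k| < ∞ and, with G(z) = Σ_{k=0}^∞ p_k z^k, one has Σ_{k=0}^∞ p_k = 1 if and only if lim_{z→1⁻} G(z) = 1. -/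
/-!
With `C` a bound on the variations, `|P n k| ≤ C` for all `n` and `k`, so coefficient
convergence gives convergence of the p.g.f.'s on `(0,1)` by dominated convergence. Conversely,
`P n 0` differs from `G_n(z)` by at most `z C`, uniformly in `n`, so `P n 0` is uniformly
approximated by convergent sequences and hence Cauchy; writing `G_n(z) = P n 0 + z G_n'(z)` with
`G_n'` the p.g.f. of the shifted sequence, the shifted p.g.f.'s converge as well, and induction on
`k` handles every coefficient. The limit is absolutely summable by Fatou's lemma for series, and
the last equivalence is Abel's theorem.
-/

open Filter Topology

noncomputable def pgf (a : ℕ → ℝ) (z : ℝ) : ℝ := ∑' k, a k * z ^ k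

theorem cauchySeq_of_forall_dist_le_cauchySeq {α : Type*} [PseudoMetricSpace α] {x : ℕ → α}
    (h : ∀ ε > 0, ∃ y : ℕ → α, CauchySeq y ∧ ∀ n, dist (x n) (y n) ≤ ε) : CauchySeq x := by
  rw [Metric.cauchySeq_iff']
  intro ε hε
  obtain ⟨y, hy, hxy⟩ := h (ε / 4) (by positivity)
  obtain ⟨N, hN⟩ := Metric.cauchySeq_iff'.1 hy (ε / 4) (by positivity)
  refine ⟨N, fun n hn => ?_⟩
  calc dist (x n) (x N) ≤ dist (x n) (y n) + dist (y n) (y N) + dist (y N) (x N) :=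
        dist_triangle4 _ _ _ _
    _ < ε := by linarith [hxy n, hxy N, hN n hn, dist_comm (x N) (y N)]

section OneSequence

variable {a : ℕ → ℝ} {z : ℝ}

theorem abs_le_tsum_abs (ha : Summable fun k => |a k|) (k : ℕ) : |a k| ≤ ∑' k, |a k| :=
  ha.le_tsum k fun _ _ => abs_nonneg _

theorem tsum_abs_comp_add_le (ha : Summable fun k => |a k|) (m : ℕ) :
    ∑' k, |a (k + m)| ≤ ∑' k, |a k| :=
  tsum_comp_le_tsum_of_inj ha (fun _ => abs_nonneg _) (add_left_injective m)

theorem abs_mul_pow_le (hz : |z| ≤ 1) (k : ℕ) : |a k * z ^ k| ≤ |a k| := by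
  rw [abs_mul, abs_pow]
  exact mul_le_of_le_one_right (abs_nonneg _) (pow_le_one₀ (abs_nonneg _) hz)

theorem summable_mul_pow (ha : Summable fun k => |a k|) (hz : |z| ≤ 1) :
    Summable fun k => a k * z ^ k :=
  (ha.of_nonneg_of_le (fun _ => abs_nonneg _) (abs_mul_pow_le hz)).of_abs

theorem abs_pgf_le (ha : Summable fun k => |a k|) (hz : |z| ≤ 1) :
    |pgf a z| ≤ ∑' k, |a k| :=
  (Real.norm_eq_abs (pgf a z)).symm.trans_le <| tsum_of_norm_bounded ha.hasSum fun k =>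
    (Real.norm_eq_abs _).trans_le (abs_mul_pow_le hz k)

theorem pgf_eq_add_mul_pgf_succ (ha : Summable fun k => |a k|) (hz : |z| ≤ 1) :
    pgf a z = a 0 + z * pgf (fun k => a (k + 1)) z := by
  rw [pgf, (summable_mul_pow ha hz).tsum_eq_zero_add, pgf, ← tsum_mul_left]
  simp only [pow_zero, mul_one, pow_succ]
  congr 1
  exact tsum_congr fun k => by ring

theorem abs_sub_pgf_le (ha : Summable fun k => |a k|) (hz₀ : 0 ≤ z) (hz₁ : z ≤ 1) :
    |a 0 - pgf a z| ≤ z * ∑' k, |a k| := by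
  have hz : |z| ≤ 1 := (abs_of_nonneg hz₀).trans_le hz₁
  have hshift : Summable fun k => |a (k + 1)| := (summable_nat_add_iff 1).2 ha
  rw [pgf_eq_add_mul_pgf_succ ha hz, sub_add_cancel_left, abs_neg, abs_mul, abs_of_nonneg hz₀]
  exact mul_le_mul_of_nonneg_left ((abs_pgf_le hshift hz).trans (tsum_abs_comp_add_le ha 1)) hz₀

theorem tsum_eq_iff_tendsto_pgf (ha : Summable a) (c : ℝ) :
    ∑' k, a k = c ↔ Tendsto (pgf a) (𝓝[<] 1) (𝓝 c) := by
  have habel : Tendsto (pgf a) (𝓝[<] 1) (𝓝 (∑' k, a k)) :=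
    Real.tendsto_tsum_powerSeries_nhdsWithin_lt ha.hasSum.tendsto_sum_nat
  exact ⟨fun h => h ▸ habel, tendsto_nhds_unique habel⟩

end OneSequence

section Family

variable {P : ℕ → ℕ → ℝ} {C : ℝ}

theorem summable_abs_of_tendsto {p : ℕ → ℝ} (hP : ∀ n, Summable fun k => |P n k|)
    (hC : ∀ n, ∑' k, |P n k| ≤ C) (hp : ∀ k, Tendsto (fun n => P n k) atTop (𝓝 (p k))) :
    Summable fun k => |p k| := by
  refine summable_of_sum_range_le (c := C) (fun _ => abs_nonneg _) fun m => ?_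
  refine le_of_tendsto (tendsto_finsetSum _ fun k _ => (hp k).abs) (Eventually.of_forall ?_)
  exact fun n => ((hP n).sum_le_tsum _ fun _ _ => abs_nonneg _).trans (hC n)

theorem tendsto_pgf_of_tendsto {p : ℕ → ℝ} {z : ℝ} (hPC : ∀ n k, |P n k| ≤ C)
    (hp : ∀ k, Tendsto (fun n => P n k) atTop (𝓝 (p k))) (hz : |z| < 1) :
    Tendsto (fun n => pgf (P n) z) atTop (𝓝 (pgf p z)) := by
  refine tendsto_tsum_of_dominated_convergence (bound := fun k => C * |z| ^ k)
    ((summable_geometric_of_lt_one (abs_nonneg z) hz).mul_left C)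
    (fun k => (hp k).mul_const _) (Eventually.of_forall fun n k => ?_)
  rw [Real.norm_eq_abs, abs_mul, abs_pow]
  exact mul_le_mul_of_nonneg_right (hPC n k) (by positivity)

theorem exists_tendsto_zero_of_tendsto_pgf (hP : ∀ n, Summable fun k => |P n k|)
    (hC : ∀ n, ∑' k, |P n k| ≤ C)
    (h : ∀ z : ℝ, 0 < z → z < 1 → ∃ L, Tendsto (fun n => pgf (P n) z) atTop (𝓝 L)) :
    ∃ L, Tendsto (fun n => P n 0) atTop (𝓝 L) := by
  refine cauchySeq_tendsto_of_complete (cauchySeq_of_forall_dist_le_cauchySeq fun ε hε => ?_)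
  have hsmall : Tendsto (fun z : ℝ => z * C) (𝓝[>] 0) (𝓝 0) := by
    simpa using ((continuous_mul_const C).tendsto 0).mono_left nhdsWithin_le_nhds
  obtain ⟨z, hzε, hz₀, hz₁⟩ :=
    ((hsmall.eventually (gt_mem_nhds hε)).and (Ioo_mem_nhdsGT one_pos)).exists
  obtain ⟨L, hL⟩ := h z hz₀ hz₁
  refine ⟨fun n => pgf (P n) z, hL.cauchySeq, fun n => ?_⟩
  calc dist (P n 0) (pgf (P n) z) ≤ z * ∑' k, |P n k| := abs_sub_pgf_le (hP n) hz₀.le hz₁.le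
    _ ≤ z * C := mul_le_mul_of_nonneg_left (hC n) hz₀.le
    _ ≤ ε := hzε.le

theorem exists_tendsto_of_tendsto_pgf (hP : ∀ n, Summable fun k => |P n k|)
    (hC : ∀ n, ∑' k, |P n k| ≤ C)
    (h : ∀ z : ℝ, 0 < z → z < 1 → ∃ L, Tendsto (fun n => pgf (P n) z) atTop (𝓝 L)) (k : ℕ) :
    ∃ L, Tendsto (fun n => P n k) atTop (𝓝 L) := by
  have hPm : ∀ m n, Summable fun j => |P n (j + m)| :=
    fun m n => (summable_nat_add_iff m).2 (hP n)
  have hCm : ∀ m n, ∑' j, |P n (j + m)| ≤ C :=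
    fun m n => (tsum_abs_comp_add_le (hP n) m).trans (hC n)
  suffices hshift : ∀ m, ∀ z : ℝ, 0 < z → z < 1 →
      ∃ L, Tendsto (fun n => pgf (fun j => P n (j + m)) z) atTop (𝓝 L) by
    simpa using exists_tendsto_zero_of_tendsto_pgf (hPm k) (hCm k) (hshift k)
  intro m
  induction m with
  | zero => simpa using h
  | succ m ih =>
    intro z hz₀ hz₁
    obtain ⟨L, hL⟩ := ih z hz₀ hz₁
    obtain ⟨L₀, hL₀⟩ := exists_tendsto_zero_of_tendsto_pgf (hPm m) (hCm m) ih
    refine ⟨(L - L₀) / z, (hL.sub hL₀).div_const z |>.congr fun n => ?_⟩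
    have hz : |z| ≤ 1 := (abs_of_pos hz₀).trans_le hz₁.le
    rw [pgf_eq_add_mul_pgf_succ (hPm m n) hz, add_sub_cancel_left, mul_div_cancel_left₀ _ hz₀.ne']
    simp only [add_right_comm _ 1 m, add_assoc]

end Family

theorem continuity_theorem_signed_pgf_general
    (P : ℕ → ℕ → ℝ)
    (hsummable : ∀ n, Summable (fun k => |P n k|))
    (hbound : ∃ C : ℝ, ∀ n, (∑' k, |P n k|) ≤ C) :
    ((∃ p : ℕ → ℝ, ∀ k, Filter.Tendsto (fun n => P n k) Filter.atTop (nhds (p k))) ↔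
      (∀ z : ℝ, 0 < z → z < 1 →
        ∃ L : ℝ, Filter.Tendsto (fun n => ∑' k, P n k * z ^ k)
          Filter.atTop (nhds L))) ∧
    (∀ p : ℕ → ℝ,
      (∀ k, Filter.Tendsto (fun n => P n k) Filter.atTop (nhds (p k))) →
      Summable (fun k => |p k|) ∧
      ((∑' k, p k) = 1 ↔
        Filter.Tendsto (fun z : ℝ => ∑' k, p k * z ^ k)
          (nhdsWithin 1 (Set.Iio 1)) (nhds 1))) := by
  obtain ⟨C, hC⟩ := hbound
  have hPC : ∀ n k, |P n k| ≤ C := fun n k => (abs_le_tsum_abs (hsummable n) k).trans (hC n)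
  refine ⟨⟨fun ⟨p, hp⟩ z hz₀ hz₁ => ?_, fun h => ?_⟩, fun p hp => ?_⟩
  · exact ⟨pgf p z, tendsto_pgf_of_tendsto hPC hp (abs_lt.2 ⟨by linarith, hz₁⟩)⟩
  · choose p hp using exists_tendsto_of_tendsto_pgf hsummable hC h
    exact ⟨p, hp⟩
  · have hp_abs := summable_abs_of_tendsto hsummable hC hp
    exact ⟨hp_abs, tsum_eq_iff_tendsto_pgf hp_abs.of_abs 1⟩

/-- Lemma 2.4 (continuity theorem for signed p.g.f.'s): for a family of
bounded signed point measures on ℕ, bounded in variation and uniformly tight,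
pointwise convergence of the coefficients is equivalent to convergence of the
signed p.g.f.'s on (0,1); moreover the limit is absolutely summable and its
total mass is 1 iff the limiting p.g.f. tends to 1 as z ↑ 1. -/
theorem continuity_theorem_signed_pgf
    (P : ℕ → ℕ → ℝ)
    (hsummable : ∀ n, Summable (fun k => |P n k|))
    (hbound : ∃ C : ℝ, ∀ n, (∑' k, |P n k|) ≤ C)
    (htight : Filter.Tendsto (fun M : ℕ => ⨆ n, ∑' k, |P n (k + M + 1)|)
      Filter.atTop (nhds 0)) :
    ((∃ p : ℕ → ℝ, ∀ k, Filter.Tendsto (fun n => P n k) Filter.atTop (nhds (p k))) ↔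
      (∀ z : ℝ, 0 < z → z < 1 →
        ∃ L : ℝ, Filter.Tendsto (fun n => ∑' k, P n k * z ^ k)
          Filter.atTop (nhds L))) ∧
    (∀ p : ℕ → ℝ,
      (∀ k, Filter.Tendsto (fun n => P n k) Filter.atTop (nhds (p k))) →
      Summable (fun k => |p k|) ∧
      ((∑' k, p k) = 1 ↔
        Filter.Tendsto (fun z : ℝ => ∑' k, p k * z ^ k)
          (nhdsWithin 1 (Set.Iio 1)) (nhds 1))) :=
  continuity_theorem_signed_pgf_general P hsummable hbound
end

section
/- Lemma 3.1 (Continuity theorem for signed characteristic functions on ℤ): Let (μ^{(n)})_{n≥1} be sequences μ^{(n)} : ℤ → ℂ with sup_n Σ_{k∈ℤ} |μ^{(n)}_k| < ∞ and lim_{M→∞} sup_n Σ_{|k|>M} |μ^{(n)}_k| = 0. Suppose the functions φ_n(θ) = Σ_{k∈ℤ} μ^{(n)}_k e^{ikθ} converge, for (Lebesgue) almost every θ ∈ ℝ, to a function g(θ). Then there exists μ : ℤ → ℂ with Σ_{k∈ℤ} |μ_k| < ∞ such that μ^{(n)}_k → μ_k as n → ∞ for every k ∈ ℤ, and g(θ)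 = Σ_{k∈ℤ} μ_k e^{ikθ} for almost every θ ∈ ℝ. -/
/-!
The characteristic functions `φₙ` are continuous and bounded by the variation bound `C`, so
dominated convergence on `(0, 2π]` turns `φₙ → g` a.e. into convergence of their Fourier
coefficients, which are the `μₙ k`, to the Fourier coefficients `μ k` of `g`. Fatou's lemma puts `μ`
in `ℓ¹`, and uniform tightness upgrades coordinatewise convergence to `ℓ¹` convergence `μₙ → μ`.
Hence `φₙ` converges everywhere to the characteristic function of `μ`, which therefore equals `g`
almost everywhere.
-/

open MeasureTheory Filter Topology Complex Set
open scoped Real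

noncomputable def charFn (c : ℤ → ℂ) (θ : ℝ) : ℂ := ∑' k : ℤ, c k * exp (I * k * θ)

lemma norm_exp_I_mul_intCast_mul (k : ℤ) (θ : ℝ) : ‖exp (I * k * θ)‖ = 1 := by
  simp [norm_exp]

section charFn

variable {c : ℤ → ℂ}

lemma summable_mul_exp (hc : Summable (‖c ·‖)) (θ : ℝ) :
    Summable fun k : ℤ => c k * exp (I * k * θ) :=
  .of_norm <| by simpa only [norm_mul, norm_exp_I_mul_intCast_mul, mul_one] using hc

lemma norm_charFn_le (hc : Summable (‖c ·‖)) (θ : ℝ) : ‖charFn c θ‖ ≤ ∑' k, ‖c k‖ := by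
  simpa only [charFn, norm_mul, norm_exp_I_mul_intCast_mul, mul_one] using
    norm_tsum_le_tsum_norm (summable_mul_exp hc θ).norm

lemma continuous_charFn (hc : Summable (‖c ·‖)) : Continuous (charFn c) :=
  continuous_tsum (fun k => by fun_prop) hc fun k θ => by
    rw [norm_mul, norm_exp_I_mul_intCast_mul, mul_one]

lemma charFn_sub {d : ℤ → ℂ} (hc : Summable (‖c ·‖)) (hd : Summable (‖d ·‖)) (θ : ℝ) :
    charFn (c - d) θ = charFn c θ - charFn d θ := by
  simp only [charFn, Pi.sub_apply, sub_mul]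
  exact (summable_mul_exp hc θ).tsum_sub (summable_mul_exp hd θ)

end charFn

lemma setIntegral_Ioc_exp_I_mul_intCast_mul (m : ℤ) :
    ∫ θ in Ioc 0 (2 * π), exp (I * m * θ) = if m = 0 then 2 * π else 0 := by
  rw [← intervalIntegral.integral_of_le Real.two_pi_pos.le]
  split_ifs with hm
  · simp [hm]
  · have hc : I * m ≠ 0 := mul_ne_zero I_ne_zero (by exact_mod_cast hm)
    rw [integral_exp_mul_complex hc]
    have : I * m * (2 * π) = m * (2 * π * I) := by ring
    simp [this, exp_int_mul_two_pi_mul_I]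

lemma fourierCoeffOn_two_pi_eq (f : ℝ → ℂ) (j : ℤ) :
    fourierCoeffOn Real.two_pi_pos f j =
      (2 * π : ℂ)⁻¹ * ∫ θ in Ioc 0 (2 * π), exp (-(I * j * θ)) * f θ := by
  rw [fourierCoeffOn_eq_integral, intervalIntegral.integral_of_le Real.two_pi_pos.le, sub_zero,
    one_div, real_smul]
  push_cast
  congr 1
  refine setIntegral_congr_fun measurableSet_Ioc fun θ _ => ?_
  rw [fourier_coe_apply]
  congr 2
  push_cast
  field_simp

lemma fourierCoeffOn_charFn {c : ℤ → ℂ} (hc : Summable (‖c ·‖)) :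
    fourierCoeffOn Real.two_pi_pos (charFn c) = c := by
  ext j
  have hterm (θ : ℝ) : exp (-(I * j * θ)) * charFn c θ =
      ∑' k : ℤ, c k * exp (I * (k - j : ℤ) * θ) := by
    rw [charFn, ← tsum_mul_left]
    refine tsum_congr fun k => ?_
    rw [mul_left_comm, ← exp_add]
    push_cast
    ring_nf
  have hint (k : ℤ) : Integrable (fun θ : ℝ => c k * exp (I * (k - j : ℤ) * θ))
      (volume.restrict (Ioc 0 (2 * π))) :=
    Continuous.integrableOn_Ioc (by fun_prop)
  have hnorm (k : ℤ) : ∫ θ in Ioc 0 (2 * π), ‖c k * exp (I * (k - j : ℤ) * θ)‖ = 2 * π * ‖c k‖ := by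
    simp only [norm_mul, norm_exp_I_mul_intCast_mul, mul_one, setIntegral_const, smul_eq_mul,
      Real.volume_real_Ioc, sub_zero, max_eq_left Real.two_pi_pos.le]
  have hval (k : ℤ) : ∫ θ in Ioc 0 (2 * π), c k * exp (I * (k - j : ℤ) * θ) =
      if k = j then 2 * π * c j else 0 := by
    rw [integral_const_mul, setIntegral_Ioc_exp_I_mul_intCast_mul]
    by_cases hk : k = j
    · simp [hk, mul_comm]
    · simp [hk, sub_eq_zero]
  rw [fourierCoeffOn_two_pi_eq, funext hterm, ← integral_tsum_of_summable_integral_norm hint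
    (by simpa only [hnorm] using hc.mul_left _)]
  simp only [hval, tsum_ite_eq]
  field_simp

lemma tendsto_fourierCoeffOn_of_ae_tendsto {E : Type*} [NormedAddCommGroup E] [NormedSpace ℂ E]
    {a b : ℝ} (hab : a < b) {F : ℕ → ℝ → E} {f : ℝ → E} {C : ℝ}
    (hF : ∀ n, AEStronglyMeasurable (F n) (volume.restrict (Ioc a b)))
    (hbound : ∀ n, ∀ᵐ x ∂volume.restrict (Ioc a b), ‖F n x‖ ≤ C)
    (hlim : ∀ᵐ x ∂volume.restrict (Ioc a b), Tendsto (F · x) atTop (𝓝 (f x))) (j : ℤ) :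
    Tendsto (fun n => fourierCoeffOn hab (F n) j) atTop (𝓝 (fourierCoeffOn hab f j)) := by
  have : Fact (0 < b - a) := ⟨sub_pos.2 hab⟩
  simp only [fourierCoeffOn_eq_integral, intervalIntegral.integral_of_le hab.le]
  refine (tendsto_integral_of_dominated_convergence (fun _ => C) (fun n => ?_)
    (integrable_const C) (fun n => ?_) ?_).const_smul _
  · exact ((fourier (-j)).continuous.comp continuous_quotient_mk').aestronglyMeasurable.smul (hF n)
  · filter_upwards [hbound n] with x hx
    rwa [norm_smul, fourier_apply, Circle.norm_coe, one_mul]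
  · filter_upwards [hlim] with x hx
    exact hx.const_smul _

section UniformlyTight

variable {α ι E : Type*} [NormedAddCommGroup E]

def UniformlyTight (a : α → ι → E) : Prop :=
  ∀ ε > 0, ∃ s : Finset ι, ∀ n, ∀ t : Finset ι, Disjoint t s → ∑ k ∈ t, ‖a n k‖ ≤ ε

variable {a : ℕ → ι → E} {b : ι → E}

lemma summable_norm_of_tendsto_of_tsum_norm_le {C : ℝ} (ha : ∀ n, Summable (‖a n ·‖))
    (hC : ∀ n, ∑' k, ‖a n k‖ ≤ C) (hlim : ∀ k, Tendsto (a · k) atTop (𝓝 (b k))) :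
    Summable (‖b ·‖) :=
  summable_of_sum_le (fun _ => norm_nonneg _) fun s =>
    le_of_tendsto (tendsto_finsetSum s fun k _ => (hlim k).norm) <| .of_forall fun n =>
      ((ha n).sum_le_tsum s fun _ _ => norm_nonneg _).trans (hC n)

lemma tendsto_tsum_norm_sub_of_uniformlyTight (hb : Summable (‖b ·‖))
    (hlim : ∀ k, Tendsto (a · k) atTop (𝓝 (b k))) (htight : UniformlyTight a) :
    Tendsto (fun n => ∑' k, ‖a n k - b k‖) atTop (𝓝 0) := by
  classical
  refine tendsto_order.2 ⟨fun x hx => .of_forall fun n =>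
    hx.trans_le (tsum_nonneg fun _ => norm_nonneg _), fun ε hε => ?_⟩
  obtain ⟨s, hs⟩ := htight (ε / 4) (by positivity)
  obtain ⟨t, ht⟩ := hb.vanishing (Iio_mem_nhds (by positivity : 0 < ε / 4))
  set u := s ∪ t
  have hu : Tendsto (fun n => ∑ k ∈ u, ‖a n k - b k‖) atTop (𝓝 0) := by
    simpa using tendsto_finsetSum u fun k _ => ((hlim k).sub_const (b k)).norm
  filter_upwards [hu.eventually_lt_const (by positivity : 0 < ε / 4)] with n hn
  refine (tsum_le_of_sum_le' (by positivity) fun v => ?_).trans_lt (by linarith : 3 * ε / 4 < ε)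
  have hdisj : Disjoint (v.filter (· ∉ u)) u :=
    Finset.disjoint_left.2 fun _ hk => (Finset.mem_filter.1 hk).2
  rw [← Finset.sum_filter_add_sum_filter_not v (· ∈ u)]
  have hin : ∑ k ∈ v.filter (· ∈ u), ‖a n k - b k‖ ≤ ∑ k ∈ u, ‖a n k - b k‖ :=
    Finset.sum_le_sum_of_subset_of_nonneg (fun k hk => (Finset.mem_filter.1 hk).2)
      fun _ _ _ => norm_nonneg _
  have hout : ∑ k ∈ v.filter (· ∉ u), ‖a n k - b k‖ ≤
      ∑ k ∈ v.filter (· ∉ u), ‖a n k‖ + ∑ k ∈ v.filter (· ∉ u), ‖b k‖ := by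
    rw [← Finset.sum_add_distrib]
    exact Finset.sum_le_sum fun k _ => norm_sub_le _ _
  have hs' := hs n _ (hdisj.mono_right Finset.subset_union_left)
  have ht' : ∑ k ∈ v.filter (· ∉ u), ‖b k‖ < ε / 4 :=
    ht _ (hdisj.mono_right Finset.subset_union_right)
  linarith

lemma uniformlyTight_of_tendsto_iSup_tail {a : ℕ → ℤ → E} {C : ℝ} (ha : ∀ n, Summable (‖a n ·‖))
    (hC : ∀ n, ∑' k, ‖a n k‖ ≤ C)
    (htight : Tendsto (fun M : ℕ => ⨆ n, ∑' k : ℤ, if (M : ℤ) < |k| then ‖a n k‖ else 0)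
      atTop (𝓝 0)) :
    UniformlyTight a := by
  intro ε hε
  obtain ⟨M, hM⟩ := (htight.eventually_lt_const hε).exists
  have htail (n : ℕ) : Summable fun k : ℤ => if (M : ℤ) < |k| then ‖a n k‖ else 0 :=
    (ha n).of_nonneg_of_le (fun k => by split_ifs <;> positivity) fun k => by split_ifs <;> simp
  -- without an upper bound, `⨆ n` would be the junk value `0`
  have hbdd : BddAbove (range fun n => ∑' k : ℤ, if (M : ℤ) < |k| then ‖a n k‖ else 0) :=
    ⟨C, forall_mem_range.2 fun n =>
      ((htail n).tsum_le_tsum (fun k => by split_ifs <;> simp) (ha n)).trans (hC n)⟩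
  refine ⟨Finset.Icc (-(M : ℤ)) M, fun n t ht => ?_⟩
  calc ∑ k ∈ t, ‖a n k‖ = ∑ k ∈ t, if (M : ℤ) < |k| then ‖a n k‖ else 0 := by
        refine Finset.sum_congr rfl fun k hk => (if_pos ?_).symm
        have := Finset.disjoint_left.1 ht hk
        rwa [Finset.mem_Icc, ← abs_le, not_le] at this
    _ ≤ ∑' k : ℤ, if (M : ℤ) < |k| then ‖a n k‖ else 0 :=
        (htail n).sum_le_tsum t fun k _ => by split_ifs <;> positivity
    _ ≤ ε := (le_ciSup hbdd n).trans hM.le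

end UniformlyTight

lemma tendsto_charFn_of_tendsto_tsum_norm_sub {a : ℕ → ℤ → ℂ} {b : ℤ → ℂ}
    (ha : ∀ n, Summable (‖a n ·‖)) (hb : Summable (‖b ·‖))
    (h : Tendsto (fun n => ∑' k, ‖a n k - b k‖) atTop (𝓝 0)) (θ : ℝ) :
    Tendsto (fun n => charFn (a n) θ) atTop (𝓝 (charFn b θ)) := by
  refine tendsto_iff_norm_sub_tendsto_zero.2 (squeeze_zero (fun _ => norm_nonneg _) (fun n => ?_) h)
  rw [← charFn_sub (ha n) hb]
  exact norm_charFn_le (((ha n).add hb).of_nonneg_of_le (fun _ => norm_nonneg _)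
    fun _ => norm_sub_le _ _) θ

/-- Lemma 3.1 (continuity theorem for signed characteristic functions on ℤ):
if a family of bounded complex point measures on ℤ is bounded in variation and
uniformly tight and its characteristic functions converge a.e. to `g`, then
the coefficients converge to those of a bounded complex point measure whose
characteristic function agrees a.e. with `g`. -/
theorem continuity_theorem_signed_charfun
    (μs : ℕ → ℤ → ℂ)
    (hsummable : ∀ n, Summable (fun k => ‖μs n k‖))
    (hbound : ∃ C : ℝ, ∀ n, (∑' k : ℤ, ‖μs n k‖) ≤ C)
    (htight : Filter.Tendsto
      (fun M : ℕ => ⨆ n, ∑' k : ℤ, if (M : ℤ) < |k| then ‖μs n k‖ else 0)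
      Filter.atTop (nhds 0))
    (g : ℝ → ℂ)
    (hconv : ∀ᵐ θ : ℝ ∂MeasureTheory.volume,
      Filter.Tendsto
        (fun n => ∑' k : ℤ, μs n k * Complex.exp (Complex.I * (k : ℂ) * (θ : ℂ)))
        Filter.atTop (nhds (g θ))) :
    ∃ μ : ℤ → ℂ, Summable (fun k => ‖μ k‖) ∧
      (∀ k : ℤ, Filter.Tendsto (fun n => μs n k) Filter.atTop (nhds (μ k))) ∧
      (∀ᵐ θ : ℝ ∂MeasureTheory.volume,
        g θ = ∑' k : ℤ, μ k * Complex.exp (Complex.I * (k : ℂ) * (θ : ℂ))) := by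
  obtain ⟨C, hC⟩ := hbound
  set μ := fourierCoeffOn Real.two_pi_pos g
  have hcoef (k : ℤ) : Tendsto (fun n => μs n k) atTop (𝓝 (μ k)) := by
    simpa only [fourierCoeffOn_charFn (hsummable _)] using
      tendsto_fourierCoeffOn_of_ae_tendsto Real.two_pi_pos (F := fun n => charFn (μs n))
        (fun n => (continuous_charFn (hsummable n)).aestronglyMeasurable)
        (fun n => ae_of_all _ fun θ => (norm_charFn_le (hsummable n) θ).trans (hC n))
        (ae_restrict_of_ae hconv) k
  have hμ := summable_norm_of_tendsto_of_tsum_norm_le hsummable hC hcoef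
  have hl1 := tendsto_tsum_norm_sub_of_uniformlyTight hμ hcoef
    (uniformlyTight_of_tendsto_iSup_tail hsummable hC htight)
  refine ⟨μ, hμ, hcoef, ?_⟩
  filter_upwards [hconv] with θ hθ
  exact tendsto_nhds_unique hθ (tendsto_charFn_of_tendsto_tsum_norm_sub hsummable hμ hl1 θ)
end

section
/- Theorem 3.1 (sufficiency): Let p : ℤ → ℝ with p_k ≥ 0 and Σ_{k∈ℤ} p_k = 1 be IPCP, i.e. there exist λ > 0 and α : ℤ → ℝ with α_0 = 0, Σ_{k∈ℤ} α_k = 1 and Σ_{k∈ℤ} |α_k| < ∞ such that Σ_{k∈ℤ} p_k e^{ikθ} = exp(λ Σ_{k∈ℤ} α_k (e^{ikθ} − 1)) for all θ ∈ ℝ. Then p is signed integer-valued infinitely divisible: for every integer n ≥ 1 there exists q^{(n)} : ℤ → ℝ with Σ_{k∈ℤ} q^{(n)}_k = 1 and Σ_{k∈ℤ} |q^{(n)}_k| < ∞ such that (Σ_{k∈ℤ} q^{(n)}_k e^{ikθ})^n = Σ_{k∈ℤ} p_k e^{ikθ} for all θ ∈ ℝ. -/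
/-! The `n`-th root is again pseudo compound Poisson, with rate `λ / n`, so it suffices to realise
`exp (Σ_k w_k e^{ikθ})`, for absolutely summable real `w`, as the characteristic function of an
absolutely summable real sequence. Weight each finite word `j : Fin m → ℤ` by
`(∏ i, w (j i)) / m!`: this weight is absolutely summable, summing it over the words of length `m`
gives the `m`-th term of the exponential series of `Σ_k w_k e^{ikθ}`, and collecting the words by
their letter sum `Σ i, j i` yields the sequence. The factor `exp (-Σ_k α_k)` then accounts for the
`- 1` in `e^{ikθ} - 1`. -/

open Complex

section PiProd

variable {ι R : Type*} [NormedCommRing R] [CompleteSpace R]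

theorem summable_norm_prod_and_hasSum_pow {f : ι → R} (hf : Summable (‖f ·‖)) (m : ℕ) :
    Summable (fun j : Fin m → ι => ‖∏ i, f (j i)‖) ∧
      HasSum (fun j : Fin m → ι => ∏ i, f (j i)) ((∑' k, f k) ^ m) := by
  induction m with
  | zero =>
    simp only [Finset.univ_eq_empty, Finset.prod_empty, pow_zero]
    exact ⟨.of_finite, by simp⟩
  | succ m ih =>
    obtain ⟨hnorm, hsum⟩ := ih
    have hprod (x : ι × (Fin m → ι)) :
        ∏ i, f (Fin.consEquiv (fun _ => ι) x i) = f x.1 * ∏ i, f (x.2 i) := by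
      simp [Fin.prod_univ_succ, Fin.consEquiv]
    rw [← (Fin.consEquiv fun _ => ι).summable_iff, ← (Fin.consEquiv fun _ => ι).hasSum_iff]
    simp only [Function.comp_def, hprod, pow_succ']
    have hnorm' := hf.mul_norm hnorm
    have hmul := summable_mul_of_summable_norm hf hnorm
    have hsum' := (hf.of_norm.hasSum : HasSum f _).mul hsum hmul
    exact ⟨hnorm', hsum'⟩

end PiProd

section ExpSeries

variable {ι 𝕜 : Type*} [RCLike 𝕜] {a : ι → 𝕜}

theorem summable_norm_prod_div_factorial (ha : Summable (‖a ·‖)) :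
    Summable fun x : Σ m : ℕ, Fin m → ι => ‖(∏ i, a (x.2 i)) / x.1.factorial‖ := by
  have hpow (m : ℕ) := (summable_norm_prod_and_hasSum_pow (f := fun k => ‖a k‖)
    (by simpa only [norm_norm] using ha) m).2.div_const (m.factorial : ℝ)
  simp only [norm_div, norm_prod, RCLike.norm_natCast]
  refine (summable_sigma_of_nonneg fun _ => by positivity).2 ⟨fun m => (hpow m).summable, ?_⟩
  simp only [fun m => (hpow m).tsum_eq]
  exact Real.summable_pow_div_factorial _

theorem hasSum_prod_div_factorial_exp (ha : Summable (‖a ·‖)) :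
    HasSum (fun x : Σ m : ℕ, Fin m → ι => (∏ i, a (x.2 i)) / x.1.factorial)
      (NormedSpace.exp (∑' k, a k)) :=
  .sigma_of_hasSum (NormedSpace.expSeries_div_hasSum_exp _)
    (fun m => (summable_norm_prod_and_hasSum_pow ha m).2.div_const _)
    (summable_norm_prod_div_factorial ha).of_norm

end ExpSeries

noncomputable def intCharFun (a : ℤ → ℝ) (θ : ℝ) : ℂ :=
  ∑' k : ℤ, (a k : ℂ) * cexp (I * k * θ)

lemma norm_ofReal_mul_exp_I_mul (r t : ℝ) : ‖(r : ℂ) * cexp (I * t)‖ = |r| := by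
  rw [norm_mul, norm_exp_I_mul_ofReal, norm_real, Real.norm_eq_abs, mul_one]

lemma summable_ofReal_mul_exp_I_mul {X : Type*} {W : X → ℝ} (hW : Summable (|W ·|))
    (t : X → ℝ) : Summable (fun x => (W x : ℂ) * cexp (I * t x)) :=
  .of_norm (by simpa only [norm_ofReal_mul_exp_I_mul] using hW)

lemma intCharFun_zero (a : ℤ → ℝ) : intCharFun a 0 = ∑' k, (a k : ℂ) := by
  simp [intCharFun]

lemma intCharFun_const_mul (c : ℝ) (a : ℤ → ℝ) (θ : ℝ) :
    intCharFun (fun k => c * a k) θ = c * intCharFun a θ := by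
  simp only [intCharFun, ← tsum_mul_left, ofReal_mul, mul_assoc]

theorem exists_intCharFun_eq_tsum {X : Type*} (W : X → ℝ) (hW : Summable (|W ·|))
    (s : X → ℤ) : ∃ q : ℤ → ℝ, Summable (|q ·|) ∧
      ∀ θ : ℝ, intCharFun q θ = ∑' x, (W x : ℂ) * cexp (I * s x * θ) := by
  refine ⟨fun k => ∑' x : s ⁻¹' {k}, W x, ?_, fun θ => ?_⟩
  · refine .of_nonneg_of_le (fun _ => abs_nonneg _) (fun k => ?_)
      (hW.hasSum.tsum_fiberwise s).summable
    have hWk : Summable (fun x : s ⁻¹' {k} => ‖W x‖) := hW.subtype _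
    simpa only [Real.norm_eq_abs] using norm_tsum_le_tsum_norm hWk
  · have hF := summable_ofReal_mul_exp_I_mul hW (fun x => s x * θ)
    simp only [ofReal_mul, ofReal_intCast, ← mul_assoc] at hF
    rw [← (hF.hasSum.tsum_fiberwise s).tsum_eq, intCharFun]
    refine tsum_congr fun k => ?_
    rw [ofReal_tsum, ← tsum_mul_right]
    exact tsum_congr fun ⟨x, (hx : s x = k)⟩ => by rw [hx]

theorem exists_intCharFun_eq_cexp (w : ℤ → ℝ) (hw : Summable (|w ·|)) :
    ∃ q : ℤ → ℝ, Summable (|q ·|) ∧ ∀ θ : ℝ, intCharFun q θ = cexp (intCharFun w θ) := by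
  let W : (Σ m : ℕ, Fin m → ℤ) → ℝ := fun x => (∏ i, w (x.2 i)) / x.1.factorial
  have hW : Summable (|W ·|) := by
    simpa only [Real.norm_eq_abs] using
      summable_norm_prod_div_factorial (a := w) (by simpa only [Real.norm_eq_abs] using hw)
  obtain ⟨q, hq, hchar⟩ := exists_intCharFun_eq_tsum W hW fun x => ∑ i, x.2 i
  refine ⟨q, hq, fun θ => ?_⟩
  let a : ℤ → ℂ := fun k => (w k : ℂ) * cexp (I * k * θ)
  have ha : Summable (‖a ·‖) := by
    simpa only [a, ← ofReal_intCast, mul_assoc, ← ofReal_mul, norm_ofReal_mul_exp_I_mul] using hw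
  have hterm (x : Σ m : ℕ, Fin m → ℤ) :
      (W x : ℂ) * cexp (I * ↑(∑ i, x.2 i) * θ) = (∏ i, a (x.2 i)) / x.1.factorial := by
    simp only [W, a, Finset.prod_mul_distrib, ← exp_sum]
    push_cast
    rw [div_mul_eq_mul_div, Finset.mul_sum, Finset.sum_mul]
  rw [hchar, tsum_congr hterm, exp_eq_exp_ℂ]
  exact (hasSum_prod_div_factorial_exp ha).tsum_eq

theorem exists_intCharFun_eq_cexp_tsum_mul_sub_one (α : ℤ → ℝ) (hα : Summable (|α ·|)) :
    ∃ q : ℤ → ℝ, Summable (|q ·|) ∧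
      ∀ θ : ℝ, intCharFun q θ = cexp (∑' k : ℤ, (α k : ℂ) * (cexp (I * k * θ) - 1)) := by
  obtain ⟨q, hq, hchar⟩ := exists_intCharFun_eq_cexp α hα
  refine ⟨fun k => Real.exp (-∑' k, α k) * q k, ?_, fun θ => ?_⟩
  · simpa only [abs_mul, Real.abs_exp] using hq.mul_left _
  · have hαe := summable_ofReal_mul_exp_I_mul hα fun k => k * θ
    simp only [ofReal_mul, ofReal_intCast, ← mul_assoc] at hαe
    simp only [mul_sub, mul_one]
    rw [intCharFun_const_mul, hchar, ofReal_exp, ← exp_add, hαe.tsum_sub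
      (summable_ofReal.2 hα.of_abs), ofReal_neg, ofReal_tsum, intCharFun, neg_add_eq_sub]

theorem ipcp_implies_signed_integer_valued_infinitely_divisible_general
    (p : ℤ → ℝ) (lam : ℝ) (α : ℤ → ℝ)
    (hαabs : Summable (fun k => |α k|))
    (hIPCP : ∀ θ : ℝ,
      (∑' k : ℤ, (p k : ℂ) * Complex.exp (Complex.I * (k : ℂ) * (θ : ℂ))) =
        Complex.exp ((lam : ℂ) *
          ∑' k : ℤ, (α k : ℂ) * (Complex.exp (Complex.I * (k : ℂ) * (θ : ℂ)) - 1))) :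
    ∀ n : ℕ, 1 ≤ n → ∃ q : ℤ → ℝ,
      (∑' k : ℤ, q k) = 1 ∧ Summable (fun k => |q k|) ∧
      ∀ θ : ℝ,
        (∑' k : ℤ, (q k : ℂ) * Complex.exp (Complex.I * (k : ℂ) * (θ : ℂ))) ^ n =
          ∑' k : ℤ, (p k : ℂ) * Complex.exp (Complex.I * (k : ℂ) * (θ : ℂ)) := by
  intro n hn
  obtain ⟨q, hq, hchar⟩ := exists_intCharFun_eq_cexp_tsum_mul_sub_one (fun k => lam / n * α k)
    (by simpa only [abs_mul] using hαabs.mul_left |lam / n|)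
  have hpow (θ : ℝ) : intCharFun q θ ^ n =
      cexp (lam * ∑' k : ℤ, (α k : ℂ) * (cexp (I * k * θ) - 1)) := by
    have hn' : (n : ℂ) ≠ 0 := Nat.cast_ne_zero.2 (by omega)
    rw [hchar, ← exp_nat_mul]
    simp only [ofReal_mul, ofReal_div, ofReal_natCast, mul_assoc, tsum_mul_left]
    rw [← mul_assoc, mul_div_cancel₀ _ hn']
  refine ⟨q, ?_, hq, fun θ => (hpow θ).trans (hIPCP θ).symm⟩
  have h0 := hchar 0
  simp only [intCharFun_zero, ofReal_zero, mul_zero, exp_zero, sub_self, tsum_zero] at h0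
  exact_mod_cast h0

/-- Theorem 3.1 (sufficiency): an integer-valued pseudo compound Poisson
distribution is signed integer-valued infinitely divisible. -/
theorem ipcp_implies_signed_integer_valued_infinitely_divisible
    (p : ℤ → ℝ) (hp : ∀ k, 0 ≤ p k) (hp1 : (∑' k : ℤ, p k) = 1)
    (lam : ℝ) (hlam : 0 < lam) (α : ℤ → ℝ) (hα0 : α 0 = 0)
    (hα1 : (∑' k : ℤ, α k) = 1) (hαabs : Summable (fun k => |α k|))
    (hIPCP : ∀ θ : ℝ,
      (∑' k : ℤ, (p k : ℂ) * Complex.exp (Complex.I * (k : ℂ) * (θ : ℂ))) =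
        Complex.exp ((lam : ℂ) *
          ∑' k : ℤ, (α k : ℂ) * (Complex.exp (Complex.I * (k : ℂ) * (θ : ℂ)) - 1))) :
    ∀ n : ℕ, 1 ≤ n → ∃ q : ℤ → ℝ,
      (∑' k : ℤ, q k) = 1 ∧ Summable (fun k => |q k|) ∧
      ∀ θ : ℝ,
        (∑' k : ℤ, (q k : ℂ) * Complex.exp (Complex.I * (k : ℂ) * (θ : ℂ))) ^ n =
          ∑' k : ℤ, (p k : ℂ) * Complex.exp (Complex.I * (k : ℂ) * (θ : ℂ)) :=
  ipcp_implies_signed_integer_valued_infinitely_divisible_general p lam α hαabs hIPCP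
end

section
/- Corollary 4.1 (Jørgensen set of a Bernoulli distribution with p > 1/2): Let 1/2 < p < 1 and r > 0. There exists a sequence q : ℕ → ℝ with q_i ≥ 0 for all i, Σ_{i=0}^∞ q_i = 1, and Σ_{i=0}^∞ q_i x^i = (p + (1−p)x)^r for all x ∈ [0,1], if and only if r is a positive integer. In other words, the Jørgensen set of the p.g.f. p + (1−p)z is ℕ. -/
/-!
For `0 < p` the function `(p + (1 - p) x) ^ r` is the sum of its binomial series
`∑ choose(r, k) p ^ r ((1 - p) / p) ^ k x ^ k` for `|x| < p / (1 - p)`, and `p > 1/2` makes this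
range contain `[0, 1]`. A power series is determined by its values on `(0, 1)`, so any `q`
representing `(p + (1 - p) x) ^ r` on `[0, 1]` must be the binomial coefficient sequence, which is
nonnegative exactly when all `choose(r, k)` are. If `n < r < n + 1`, the product
`r (r - 1) ⋯ (r - n - 1) = (n + 2)! choose(r, n + 2)` has exactly one negative factor.
-/

open Finset Filter Topology

theorem Ring.factorial_mul_choose_eq_prod_range {R : Type*} [CommRing R] [BinomialRing R]
    (r : R) (k : ℕ) : (k.factorial : R) * Ring.choose r k = ∏ j ∈ range k, (r - j) := by
  rw [← nsmul_eq_mul, ← Ring.descPochhammer_eq_factorial_smul_choose,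
    ← descPochhammer_eval_eq_prod_range, ← Polynomial.aeval_eq_smeval,
    Polynomial.aeval_def, ← Polynomial.eval_map, descPochhammer_map]

theorem Real.forall_choose_nonneg_iff (r : ℝ) :
    (∀ k, 0 ≤ Ring.choose r k) ↔ ∃ n : ℕ, r = n := by
  refine ⟨fun h => ?_, fun ⟨n, hn⟩ k => by rw [hn, Ring.choose_natCast]; positivity⟩
  by_contra hr
  push Not at hr
  rcases lt_or_ge r 0 with hneg | hnonneg
  · exact (h 1).not_gt (by rwa [Ring.choose_one_right])
  set n := ⌊r⌋₊
  have hn : (n : ℝ) < r := (Nat.floor_le hnonneg).lt_of_ne (hr n).symm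
  have hn1 : r < n + 1 := Nat.lt_floor_add_one r
  have hprod : ∏ j ∈ range (n + 2), (r - j) < 0 := by
    rw [prod_range_succ]
    refine mul_neg_of_pos_of_neg (prod_pos fun j hj => ?_) (by push_cast; linarith)
    have : (j : ℝ) ≤ n := by exact_mod_cast Nat.lt_succ_iff.mp (mem_range.mp hj)
    linarith
  rw [← Ring.factorial_mul_choose_eq_prod_range] at hprod
  exact (mul_nonneg (Nat.cast_nonneg _) (h (n + 2))).not_gt hprod

theorem eq_of_tsum_mul_pow_eqOn_Ioo {c d : ℕ → ℝ} {ε : ℝ} (hε : 0 < ε)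
    (hc : ∀ x ∈ Set.Ioo 0 ε, Summable fun n => c n * x ^ n)
    (hd : ∀ x ∈ Set.Ioo 0 ε, Summable fun n => d n * x ^ n)
    (h : ∀ x ∈ Set.Ioo 0 ε, ∑' n, c n * x ^ n = ∑' n, d n * x ^ n) : c = d := by
  set P := FormalMultilinearSeries.ofScalars ℝ (c - d)
  have hsum : ∀ x ∈ Set.Ioo 0 ε, HasSum (fun n => (c - d) n * x ^ n) 0 := by
    intro x hx
    simpa [sub_mul, h x hx] using (hc x hx).hasSum.sub (hd x hx).hasSum
  have hradius : 0 < P.radius := by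
    obtain ⟨t, ht0, htε⟩ := exists_between hε
    refine (ENNReal.coe_pos.mpr ht0).trans_le
      (P.le_radius_of_tendsto (r := ⟨t, ht0.le⟩) (l := 0) ?_)
    change Tendsto (fun n => ‖P n‖ * t ^ n) atTop (𝓝 0)
    simpa [P, FormalMultilinearSeries.ofScalars_norm, abs_mul, abs_of_pos ht0] using
      ((hsum t ⟨ht0, htε⟩).summable.tendsto_atTop_zero).abs
  have hzero : ∀ᶠ x in 𝓝[>] 0, P.sum x = 0 := by
    filter_upwards [Ioo_mem_nhdsGT hε] with x hx
    show FormalMultilinearSeries.ofScalarsSum (c - d) x = 0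
    simpa [FormalMultilinearSeries.ofScalars_sum_eq] using (hsum x hx).tsum_eq
  have hP := (P.hasFPowerSeriesOnBall hradius).hasFPowerSeriesAt
  have hP0 : P = 0 := hP.eq_zero_of_eventually <|
    hP.analyticAt.frequently_zero_iff_eventually_zero.mp
      (hzero.frequently.filter_mono (nhdsWithin_mono _ fun x hx => ne_of_gt hx))
  funext n
  simpa [P, sub_eq_zero] using FormalMultilinearSeries.coeff_eq_zero.mpr (congrFun hP0 n)

noncomputable def rpowAffineCoeff (a b r : ℝ) (k : ℕ) : ℝ :=
  Ring.choose r k * a ^ r * (b / a) ^ k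

theorem hasSum_rpowAffineCoeff_mul_pow {a b r x : ℝ} (ha : 0 < a) (hx : |b * x| < a) :
    HasSum (fun k => rpowAffineCoeff a b r k * x ^ k) ((a + b * x) ^ r) := by
  set y := b * x / a with hy_def
  have hy : |y| < 1 := by rwa [abs_div, abs_of_pos ha, div_lt_one ha]
  have hsum := (Real.one_add_rpow_hasFPowerSeriesOnBall_zero (a := r).hasSum (y := y)
    (by rwa [Metric.mem_eball, edist_zero_right, Real.enorm_eq_ofReal_abs, ENNReal.ofReal_lt_one]))
  simp only [zero_add, binomialSeries, FormalMultilinearSeries.ofScalars_apply_eq, smul_eq_mul]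
    at hsum
  have hval : a + b * x = a * (1 + y) := by rw [hy_def]; field_simp
  rw [hval, Real.mul_rpow ha.le (by linarith [neg_abs_le y])]
  have hterm : (fun k => rpowAffineCoeff a b r k * x ^ k) =
      fun k => a ^ r * (Ring.choose r k * y ^ k) := by
    funext k
    simp only [rpowAffineCoeff, hy_def, div_pow, mul_pow]
    field_simp
  rw [hterm]
  exact hsum.mul_left _

theorem rpowAffineCoeff_nonneg_iff {a b : ℝ} (r : ℝ) (k : ℕ) (ha : 0 < a) (hb : 0 < b) :
    0 ≤ rpowAffineCoeff a b r k ↔ 0 ≤ Ring.choose r k := by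
  rw [rpowAffineCoeff, mul_assoc, mul_nonneg_iff_of_pos_right (by positivity)]

/-- Corollary 4.1: for a Bernoulli p.g.f. `p + (1-p) z` with `1/2 < p < 1`,
the real power `(p + (1-p) x) ^ r` (with `r > 0`) is the p.g.f. of a discrete
probability distribution on ℕ if and only if `r` is a positive integer;
i.e. the Jørgensen set of this p.g.f. is ℕ. -/
theorem jorgensen_set_bernoulli
    (p : ℝ) (hp : 1 / 2 < p) (hp1 : p < 1) (r : ℝ) (hr : 0 < r) :
    (∃ q : ℕ → ℝ, (∀ i, 0 ≤ q i) ∧ (∑' i, q i) = 1 ∧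
      ∀ x : ℝ, x ∈ Set.Icc (0 : ℝ) 1 →
        (∑' i, q i * x ^ i) = (p + (1 - p) * x) ^ r) ↔
    (∃ n : ℕ, 0 < n ∧ r = n) := by
  have hp0 : 0 < p := by linarith
  have h1p : 0 < 1 - p := by linarith
  set a := rpowAffineCoeff p (1 - p) r
  have hexp (x : ℝ) (hx : x ∈ Set.Icc (0 : ℝ) 1) :
      HasSum (fun k => a k * x ^ k) ((p + (1 - p) * x) ^ r) := by
    refine hasSum_rpowAffineCoeff_mul_pow hp0 ?_
    rw [abs_of_nonneg (mul_nonneg h1p.le hx.1)]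
    nlinarith [hx.2]
  constructor
  · rintro ⟨q, hq_nonneg, hq_sum, hq_pgf⟩
    have hq : Summable q := by
      by_contra h
      simp [tsum_eq_zero_of_not_summable h] at hq_sum
    have hqa : q = a := by
      refine eq_of_tsum_mul_pow_eqOn_Ioo one_pos (fun x hx => ?_)
        (fun x hx => (hexp x (Set.Ioo_subset_Icc_self hx)).summable)
        (fun x hx => by rw [hq_pgf x (Set.Ioo_subset_Icc_self hx),
          (hexp x (Set.Ioo_subset_Icc_self hx)).tsum_eq])
      exact hq.of_nonneg_of_le (fun n => mul_nonneg (hq_nonneg n) (pow_nonneg hx.1.le n))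
        (fun n => mul_le_of_le_one_right (hq_nonneg n) (pow_le_one₀ hx.1.le hx.2.le))
    obtain ⟨n, rfl⟩ := (Real.forall_choose_nonneg_iff r).mp fun k =>
      (rpowAffineCoeff_nonneg_iff r k hp0 h1p).mp (hqa ▸ hq_nonneg k : 0 ≤ a k)
    exact ⟨n, by exact_mod_cast hr, rfl⟩
  · rintro ⟨n, -, rfl⟩
    refine ⟨a, fun k => (rpowAffineCoeff_nonneg_iff _ k hp0 h1p).mpr
      ((Real.forall_choose_nonneg_iff _).mpr ⟨n, rfl⟩ k), ?_, fun x hx => (hexp x hx).tsum_eq⟩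
    simpa using (hexp 1 ⟨zero_le_one, le_rfl⟩).tsum_eq
end

section
/- Corollary 4.2: Let (α_k)_{k≥1} be a real sequence with Σ_{k≥1} α_k = 1 and Σ_{k≥1} |α_k| < ∞, and suppose α_m < 0 for some m ≥ 1. Then there exists λ₀ > 0 such that for every λ with 0 < λ < λ₀ there is NO sequence P : ℕ → ℝ with P_i ≥ 0 for all i and Σ_{i=0}^∞ P_i x^i = exp(λ Σ_{k≥1} α_k (x^k − 1)) for all x ∈ [0,1]; that is, exp(λ Σ_{k≥1} α_k (z^k − 1)) is not a probability generating function for λ sufficiently small. -/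
/-!
Write `g x = ∑ α_k (x ^ (k + 1) - 1)` and `Δ_t` for the forward difference with step `t`.
Since `Δ_t^n (x ^ i)` is nonnegative at `0`, a power series with nonnegative coefficients has
nonnegative `n`-th differences at `0`, as long as the points `0, t, …, n t` lie in `[0, 1]`.
Take `n = m + 1` with `α_m < 0`: `Δ_t^n` kills `x ^ i` for `i < n` and sends `x ^ n` to `n! t ^ n`,
so `Δ_t^n g 0 = α_m n! t ^ n + O(t ^ (n + 1)) < 0` for small `t`. For this fixed `t`,
`exp (λ g) = 1 + λ g + O(λ ^ 2)` uniformly on `[0, 1]`, hence `Δ_t^n exp (λ g) 0 < 0` for small `λ`.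
-/

open Finset fwdDiff Function Nat

section FwdDiff

variable {M G : Type*} [AddCommMonoid M] [AddCommGroup G] (h : M)

theorem fwdDiff_iter_congr {f g : M → G} {n : ℕ} {y : M}
    (hfg : ∀ k ≤ n, f (y + k • h) = g (y + k • h)) : Δ_[h] ^[n] f y = Δ_[h] ^[n] g y := by
  simp only [fwdDiff_iter_eq_sum_shift]
  exact sum_congr rfl fun k hk => by rw [hfg k (Nat.lt_succ_iff.mp (mem_range.mp hk))]

theorem fwdDiff_iter_add_const (f : M → G) (c : G) {n : ℕ} (hn : n ≠ 0) :
    Δ_[h] ^[n] (fun x => f x + c) = Δ_[h] ^[n] f := by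
  obtain ⟨n, rfl⟩ := Nat.exists_eq_succ_of_ne_zero hn
  simp only [iterate_succ_apply]
  congr 1
  ext x
  simp only [fwdDiff, add_sub_add_right_eq_sub]

theorem fwdDiff_iter_tsum [TopologicalSpace G] [IsTopologicalAddGroup G] [T2Space G] {ι : Type*}
    (f : ι → M → G) {n : ℕ} {y : M} (hf : ∀ k ≤ n, Summable fun i => f i (y + k • h)) :
    Δ_[h] ^[n] (fun x => ∑' i, f i x) y = ∑' i, Δ_[h] ^[n] (f i) y := by
  have hf' : ∀ k ∈ range (n + 1), Summable fun i => f i (y + k • h) :=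
    fun k hk => hf k (Nat.lt_succ_iff.mp (mem_range.mp hk))
  simp only [fwdDiff_iter_eq_sum_shift]
  rw [Summable.tsum_finsetSum fun k hk => (hf' k hk).const_smul _]
  exact sum_congr rfl fun k hk => ((hf' k hk).tsum_const_smul _).symm

theorem abs_fwdDiff_iter_le {f : M → ℝ} {n : ℕ} {y : M} {B : ℝ}
    (hf : ∀ k ≤ n, |f (y + k • h)| ≤ B) : |Δ_[h] ^[n] f y| ≤ 2 ^ n * B := by
  rw [fwdDiff_iter_eq_sum_shift]
  calc |∑ k ∈ range (n + 1), ((-1 : ℤ) ^ (n - k) * n.choose k) • f (y + k • h)|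
      ≤ ∑ k ∈ range (n + 1), (n.choose k : ℝ) * B := by
        refine (abs_sum_le_sum_abs _ _).trans (sum_le_sum fun k hk => ?_)
        simp only [zsmul_eq_mul, Int.cast_mul, Int.cast_pow, Int.cast_neg, Int.cast_one,
          Int.cast_natCast, abs_mul, abs_pow, abs_neg, abs_one, one_pow, one_mul, Nat.abs_cast]
        exact mul_le_mul_of_nonneg_left (hf k (Nat.lt_succ_iff.mp (mem_range.mp hk))) (by positivity)
    _ = 2 ^ n * B := by
        rw [← sum_mul]
        congr 1
        exact_mod_cast Nat.sum_range_choose n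

end FwdDiff

section Monomials

variable {R : Type*} [CommRing R]

theorem fwdDiff_pow (h : R) (i : ℕ) :
    Δ_[h] (fun x => x ^ i) = ∑ j ∈ range i, (i.choose j * h ^ (i - j)) • fun x => x ^ j := by
  ext x
  simp [fwdDiff, add_pow, sum_range_succ, mul_comm, mul_assoc]

theorem fwdDiff_iter_mul_apply {G : Type*} [AddCommGroup G] (f : R → G) (t y : R) (n : ℕ) :
    Δ_[t] ^[n] f (t * y) = Δ_[1] ^[n] (fun x => f (t * x)) y := by
  simp only [fwdDiff_iter_eq_sum_shift, nsmul_eq_mul, mul_one]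
  exact sum_congr rfl fun k _ => by rw [mul_add, mul_comm t (k : R)]

theorem fwdDiff_iter_pow_apply_zero (t : R) (n i : ℕ) :
    Δ_[t] ^[n] (fun x => x ^ i) 0 = t ^ i * Δ_[1] ^[n] (fun x => x ^ i) 0 := by
  rw [← mul_zero t, fwdDiff_iter_mul_apply, mul_zero]
  simp_rw [mul_pow]
  exact congrFun (fwdDiff_iter_const_smul 1 (t ^ i) (fun x : R => x ^ i) n) 0

theorem fwdDiff_iter_pow_nonneg [PartialOrder R] [IsOrderedRing R] {h y : R}
    (hh : 0 ≤ h) (hy : 0 ≤ y) (i n : ℕ) : 0 ≤ Δ_[h] ^[n] (fun x => x ^ i) y := by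
  induction i using Nat.strong_induction_on generalizing n with
  | _ i ih =>
    cases n with
    | zero => exact pow_nonneg hy i
    | succ n =>
      rw [iterate_succ_apply, fwdDiff_pow, fwdDiff_iter_finsetSum, Finset.sum_apply]
      refine sum_nonneg fun j hj => ?_
      rw [fwdDiff_iter_const_smul, Pi.smul_apply, smul_eq_mul]
      exact mul_nonneg (by positivity) (ih j (mem_range.mp hj) n)

end Monomials

theorem nsmul_mem_Icc_zero_mul {t : ℝ} (ht : 0 ≤ t) {k n : ℕ} (hk : k ≤ n) :
    k • t ∈ Set.Icc 0 (n * t) := by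
  rw [nsmul_eq_mul]
  exact ⟨by positivity, by gcongr⟩

theorem abs_fwdDiff_iter_pow_le {t : ℝ} (ht : 0 ≤ t) (n i : ℕ) :
    |Δ_[t] ^[n] (fun x => x ^ i) 0| ≤ 2 ^ n * (n * t) ^ i :=
  abs_fwdDiff_iter_le t fun k hk => by
    obtain ⟨h0, h1⟩ := nsmul_mem_Icc_zero_mul ht hk
    rw [zero_add, abs_of_nonneg (pow_nonneg h0 i)]
    exact pow_le_pow_left₀ h0 h1 i

theorem mul_fwdDiff_iter_pow_le {t : ℝ} (ht : 0 ≤ t) {n : ℕ} (hnt : n * t ≤ 1) (a : ℝ) (i : ℕ) :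
    a * Δ_[t] ^[n] (fun x => x ^ i) 0 ≤
      (if i = n then a * (n ! * t ^ n) else 0) + |a| * (2 ^ n * (n * t) ^ (n + 1)) := by
  have hrem : 0 ≤ |a| * (2 ^ n * (n * t) ^ (n + 1)) := by positivity
  rcases lt_trichotomy i n with hin | rfl | hni
  · rw [fwdDiff_iter_pow_apply_zero, fwdDiff_iter_pow_eq_zero_of_lt hin, if_neg hin.ne]
    simpa using hrem
  · rw [fwdDiff_iter_pow_apply_zero, fwdDiff_iter_eq_factorial, if_pos rfl]
    simpa [mul_comm] using hrem
  · rw [if_neg hni.ne', zero_add]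
    calc a * Δ_[t] ^[n] (fun x => x ^ i) 0 ≤ |a| * (2 ^ n * (n * t) ^ i) :=
          (le_abs_self _).trans (abs_mul a _ ▸ by gcongr; exact abs_fwdDiff_iter_pow_le ht n i)
      _ ≤ |a| * (2 ^ n * (n * t) ^ (n + 1)) :=
          mul_le_mul_of_nonneg_left (mul_le_mul_of_nonneg_left
            (pow_le_pow_of_le_one (by positivity) hnt hni) (by positivity)) (abs_nonneg a)

theorem fwdDiff_iter_nonneg_of_hasSum {P : ℕ → ℝ} (hP : ∀ i, 0 ≤ P i) {f : ℝ → ℝ} {t : ℝ}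
    (ht : 0 ≤ t) {n : ℕ} (hf : ∀ k ≤ n, HasSum (fun i => P i * (k • t) ^ i) (f (k • t))) :
    0 ≤ Δ_[t] ^[n] f 0 := by
  rw [fwdDiff_iter_congr t (g := fun x => ∑' i, P i * x ^ i)
      fun k hk => by rw [zero_add, (hf k hk).tsum_eq],
    fwdDiff_iter_tsum t _ fun k hk => by simpa only [zero_add] using (hf k hk).summable]
  refine tsum_nonneg fun i => ?_
  rw [show (fun x => P i * x ^ i) = P i • fun x => x ^ i from rfl, fwdDiff_iter_const_smul,
    Pi.smul_apply, smul_eq_mul]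
  exact mul_nonneg (hP i) (fwdDiff_iter_pow_nonneg ht le_rfl i n)

theorem exists_pos_forall_fwdDiff_iter_exp_mul_neg {M : Type*} [AddCommMonoid M] {g : M → ℝ}
    {h y : M} {n : ℕ} {A : ℝ} (hn : n ≠ 0) (hg : ∀ k ≤ n, |g (y + k • h)| ≤ A)
    (hneg : Δ_[h] ^[n] g y < 0) :
    ∃ lam₀ > 0, ∀ lam, 0 < lam → lam < lam₀ →
      Δ_[h] ^[n] (fun x => Real.exp (lam * g x)) y < 0 := by
  set δ := -Δ_[h] ^[n] g y
  have hδ : 0 < δ := neg_pos.mpr hneg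
  have hA : 0 ≤ A := (abs_nonneg _).trans (hg 0 (Nat.zero_le n))
  refine ⟨min (1 / (A + 1)) (δ / (2 ^ n * A ^ 2 + 1)), by positivity, fun lam hlam hlt => ?_⟩
  set E := fun x => Real.exp (lam * g x) - 1 - lam * g x
  have hsplit : Δ_[h] ^[n] (fun x => Real.exp (lam * g x)) y =
      Δ_[h] ^[n] E y + lam * Δ_[h] ^[n] g y := by
    rw [show (fun x => Real.exp (lam * g x)) = fun x => (E + lam • g) x + 1 by ext; simp [E],
      fwdDiff_iter_add_const h _ _ hn, fwdDiff_iter_add, fwdDiff_iter_const_smul]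
    rfl
  have hE : |Δ_[h] ^[n] E y| ≤ 2 ^ n * (lam ^ 2 * A ^ 2) := by
    refine abs_fwdDiff_iter_le h fun k hk => ?_
    have hlamA : lam * A ≤ 1 := by
      have := (lt_min_iff.mp hlt).1
      rw [lt_div_iff₀ (by positivity)] at this
      nlinarith
    have hgk : |lam * g (y + k • h)| ≤ lam * A := by
      rw [abs_mul, abs_of_pos hlam]; exact mul_le_mul_of_nonneg_left (hg k hk) hlam.le
    calc |E (y + k • h)| ≤ (lam * g (y + k • h)) ^ 2 :=
          Real.abs_exp_sub_one_sub_id_le (hgk.trans hlamA)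
      _ = |lam * g (y + k • h)| ^ 2 := (sq_abs _).symm
      _ ≤ (lam * A) ^ 2 := by gcongr
      _ = lam ^ 2 * A ^ 2 := mul_pow _ _ _
  have hlamδ : lam * (2 ^ n * A ^ 2 + 1) < δ :=
    (lt_div_iff₀ (by positivity)).mp (lt_min_iff.mp hlt).2
  rw [hsplit]
  nlinarith [(abs_le.mp hE).2]

section PowSubOne

variable {α : ℕ → ℝ}

theorem abs_mul_pow_sub_one_le {x : ℝ} (hx : x ∈ Set.Icc 0 1) (a : ℝ) (k : ℕ) :
    |a * (x ^ k - 1)| ≤ |a| := by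
  rw [abs_mul]
  refine mul_le_of_le_one_right (abs_nonneg a) (abs_le.mpr ⟨?_, ?_⟩)
  · linarith [pow_nonneg hx.1 k]
  · linarith [pow_le_one₀ hx.1 hx.2 (n := k)]

theorem summable_mul_pow_sub_one (hα : Summable fun k => |α k|) {x : ℝ} (hx : x ∈ Set.Icc 0 1) :
    Summable fun k => α k * (x ^ (k + 1) - 1) :=
  hα.of_norm_bounded fun k => abs_mul_pow_sub_one_le hx (α k) (k + 1)

theorem abs_tsum_mul_pow_sub_one_le (hα : Summable fun k => |α k|) {x : ℝ}
    (hx : x ∈ Set.Icc 0 1) : |∑' k, α k * (x ^ (k + 1) - 1)| ≤ ∑' k, |α k| :=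
  Real.norm_eq_abs _ ▸
    tsum_of_norm_bounded hα.hasSum fun k => abs_mul_pow_sub_one_le hx (α k) (k + 1)

theorem fwdDiff_iter_tsum_mul_pow_sub_one (hα : Summable fun k => |α k|) {t : ℝ} (ht : 0 ≤ t)
    {n : ℕ} (hn : n ≠ 0) (hnt : n * t ≤ 1) :
    Δ_[t] ^[n] (fun x => ∑' k, α k * (x ^ (k + 1) - 1)) 0 =
      ∑' k, α k * Δ_[t] ^[n] (fun x => x ^ (k + 1)) 0 := by
  rw [fwdDiff_iter_tsum t (fun k x => α k * (x ^ (k + 1) - 1)) fun j hj =>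
    summable_mul_pow_sub_one hα <| by
      rw [zero_add]; exact Set.Icc_subset_Icc_right hnt (nsmul_mem_Icc_zero_mul ht hj)]
  refine tsum_congr fun k => ?_
  rw [show (fun x => α k * (x ^ (k + 1) - 1)) = fun x => (α k • fun x => x ^ (k + 1)) x + -α k by
      ext; simp; ring,
    fwdDiff_iter_add_const t _ _ hn, fwdDiff_iter_const_smul, Pi.smul_apply, smul_eq_mul]

theorem fwdDiff_iter_tsum_mul_pow_sub_one_le (hα : Summable fun k => |α k|) {t : ℝ} (ht : 0 ≤ t)
    (m : ℕ) (hmt : ((m + 1 : ℕ) : ℝ) * t ≤ 1) :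
    Δ_[t] ^[m + 1] (fun x => ∑' k, α k * (x ^ (k + 1) - 1)) 0 ≤
      α m * ((m + 1)! * t ^ (m + 1)) +
        (∑' k, |α k|) * (2 ^ (m + 1) * ((m + 1 : ℕ) * t) ^ (m + 1 + 1)) := by
  have hsummable : Summable fun k => α k * Δ_[t] ^[m + 1] (fun x => x ^ (k + 1)) 0 :=
    (hα.mul_right (2 ^ (m + 1))).of_norm_bounded fun k => by
      rw [Real.norm_eq_abs, abs_mul]
      refine mul_le_mul_of_nonneg_left ((abs_fwdDiff_iter_pow_le ht _ _).trans ?_) (abs_nonneg _)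
      exact mul_le_of_le_one_right (by positivity) (pow_le_one₀ (by positivity) hmt)
  have hbound := fun k => mul_fwdDiff_iter_pow_le ht hmt (α k) (k + 1)
  simp only [Nat.add_right_cancel_iff] at hbound
  rw [fwdDiff_iter_tsum_mul_pow_sub_one hα ht m.succ_ne_zero hmt]
  have hlead := hasSum_single (f := fun k =>
    if k = m then α k * ((m + 1)! * t ^ (m + 1)) else 0) m fun k hk => if_neg hk
  refine (hsummable.tsum_le_tsum hbound (hlead.summable.add (hα.mul_right _))).trans_eq ?_
  rw [hlead.summable.tsum_add (hα.mul_right _), hlead.tsum_eq, if_pos rfl, tsum_mul_right]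

theorem exists_fwdDiff_iter_tsum_mul_pow_sub_one_neg (hα : Summable fun k => |α k|) {m : ℕ}
    (hm : α m < 0) :
    ∃ t > 0, ((m + 1 : ℕ) : ℝ) * t ≤ 1 ∧
      Δ_[t] ^[m + 1] (fun x => ∑' k, α k * (x ^ (k + 1) - 1)) 0 < 0 := by
  set N := ((m + 1 : ℕ) : ℝ)
  set C := (∑' k, |α k|) * 2 ^ (m + 1) * N ^ (m + 1 + 1)
  set c := -α m * (((m + 1)! : ℕ) : ℝ)
  have hN : 0 < N := by positivity
  have hC : 0 ≤ C := by positivity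
  have hc : 0 < c := mul_pos (neg_pos.mpr hm) (by positivity)
  set t := min (1 / N) (c / (C + 1))
  have ht : 0 < t := by positivity
  have hNt : N * t ≤ 1 := (le_div_iff₀' hN).mp (min_le_left _ _)
  have hCt : C * t < c := by
    have := (le_div_iff₀ (by positivity)).mp (min_le_right (1 / N) (c / (C + 1)))
    nlinarith
  refine ⟨t, ht, hNt, (fwdDiff_iter_tsum_mul_pow_sub_one_le hα ht.le m hNt).trans_lt ?_⟩
  have key : α m * ((m + 1)! * t ^ (m + 1)) +
      (∑' k, |α k|) * (2 ^ (m + 1) * (N * t) ^ (m + 1 + 1)) = t ^ (m + 1) * (C * t - c) := by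
    simp only [C, c]; ring
  rw [key]
  exact mul_neg_of_pos_of_neg (by positivity) (by linarith)

end PowSubOne

theorem not_pgf_for_small_lambda_general
    (α : ℕ → ℝ) (hαabs : Summable (fun k => |α k|))
    (hneg : ∃ m : ℕ, α m < 0) :
    ∃ lam₀ : ℝ, 0 < lam₀ ∧ ∀ lam : ℝ, 0 < lam → lam < lam₀ →
      ¬ ∃ P : ℕ → ℝ, (∀ i, 0 ≤ P i) ∧
        ∀ x : ℝ, x ∈ Set.Icc (0 : ℝ) 1 →
          (∑' i, P i * x ^ i) =
            Real.exp (lam * ∑' k, α k * (x ^ (k + 1) - 1)) := by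
  obtain ⟨m, hm⟩ := hneg
  obtain ⟨t, ht, hmt, hΔ⟩ := exists_fwdDiff_iter_tsum_mul_pow_sub_one_neg hαabs hm
  have hmem : ∀ k ≤ m + 1, k • t ∈ Set.Icc (0 : ℝ) 1 :=
    fun k hk => Set.Icc_subset_Icc_right hmt (nsmul_mem_Icc_zero_mul ht.le hk)
  obtain ⟨lam₀, hlam₀, hexp⟩ := exists_pos_forall_fwdDiff_iter_exp_mul_neg m.succ_ne_zero
    (fun k hk => by rw [zero_add]; exact abs_tsum_mul_pow_sub_one_le hαabs (hmem k hk)) hΔ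
  refine ⟨lam₀, hlam₀, fun lam hlam hlt ⟨P, hP, hPF⟩ => ?_⟩
  refine (hexp lam hlam hlt).not_ge (fwdDiff_iter_nonneg_of_hasSum hP ht.le fun k hk => ?_)
  have hk := hPF _ (hmem k hk)
  -- a non-summable series has `tsum` equal to `0`, which the exponential is not
  have hsum : Summable fun i => P i * (k • t) ^ i := by
    by_contra hns
    exact (Real.exp_pos _).ne' (hk ▸ tsum_eq_zero_of_not_summable hns)
  exact hk ▸ hsum.hasSum

/-- Corollary 4.2: if some `α_k` (here `α k = α_{k+1}`, some entry negative)
is negative, then `exp (λ ∑ α_k (x^k - 1))` is not a probability generating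
function for all sufficiently small `λ > 0`. -/
theorem not_pgf_for_small_lambda
    (α : ℕ → ℝ) (hα1 : (∑' k, α k) = 1) (hαabs : Summable (fun k => |α k|))
    (hneg : ∃ m : ℕ, α m < 0) :
    ∃ lam₀ : ℝ, 0 < lam₀ ∧ ∀ lam : ℝ, 0 < lam → lam < lam₀ →
      ¬ ∃ P : ℕ → ℝ, (∀ i, 0 ≤ P i) ∧
        ∀ x : ℝ, x ∈ Set.Icc (0 : ℝ) 1 →
          (∑' i, P i * x ^ i) =
            Real.exp (lam * ∑' k, α k * (x ^ (k + 1) - 1)) :=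
  not_pgf_for_small_lambda_general α hαabs hneg
end

section
/- Proposition 4.2: Let S ⊆ (0,∞) satisfy: 1 ∈ S; S is closed under addition (a, b ∈ S implies a + b ∈ S); and S is closed as a subset of (0,∞) (every x ∈ (0,∞) that is a limit of points of S belongs to S). Then: (1) either S = (0,∞) or there exists λ > 0 such that S ⊆ [λ, ∞); (2) if S has nonempty interior, then there exists λ with 0 < λ < ∞ such that [λ, ∞) ⊆ S. -/
/-!
Multiples of elements of `S` stay in `S`. If `S` has elements below every `ε > 0`, their
multiples are `ε`-dense in `(0,∞)`, and closedness gives `S = (0,∞)`. If `S ⊇ [a,b]` with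
`0 < a < b`, then `S ⊇ [n a, n b]` for all `n ≥ 1`, and consecutive such intervals overlap as
soon as `n (b - a) ≥ a`.
-/

open Set

theorem nsmul_mem_of_add_mem {M : Type*} [AddMonoid M] {S : Set M}
    (hadd : ∀ a ∈ S, ∀ b ∈ S, a + b ∈ S) {x : M} (hx : x ∈ S) {n : ℕ} (hn : n ≠ 0) :
    n • x ∈ S := by
  induction n, Nat.one_le_iff_ne_zero.2 hn using Nat.le_induction with
  | base => simpa using hx
  | succ n _ ih => rw [succ_nsmul]; exact hadd _ (ih (by omega)) _ hx

theorem exists_nat_mul_mem_Ioc {K : Type*} [Field K] [LinearOrder K] [IsStrictOrderedRing K]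
    [FloorSemiring K] {s x : K} (hs : 0 < s) (hx : 0 ≤ x) :
    ∃ n : ℕ, (n : K) * s ∈ Ioc (x - s) x := by
  refine ⟨⌊x / s⌋₊, ?_, ?_⟩
  · have := Nat.lt_floor_add_one (x / s)
    rw [div_lt_iff₀ hs] at this
    linarith
  · exact (le_div_iff₀ hs).1 (Nat.floor_le (div_nonneg hx hs.le))

theorem Ioi_subset_closure_of_forall_nonempty_inter_Ioo {S : Set ℝ}
    (hadd : ∀ a ∈ S, ∀ b ∈ S, a + b ∈ S)
    (hsmall : ∀ ε > 0, (S ∩ Ioo 0 ε).Nonempty) : Ioi 0 ⊆ closure S := by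
  intro x (hx : 0 < x)
  refine Metric.mem_closure_iff.2 fun ε hε => ?_
  obtain ⟨s, hsS, hs0, hsε⟩ := hsmall (min ε x) (lt_min hε hx)
  obtain ⟨n, hlt, hle⟩ := exists_nat_mul_mem_Ioc hs0 hx.le
  have hn : n ≠ 0 := by
    rintro rfl
    rw [Nat.cast_zero, zero_mul] at hlt
    linarith [min_le_right ε x]
  refine ⟨n * s, ?_, ?_⟩
  · simpa using nsmul_mem_of_add_mem hadd hsS hn
  · rw [Real.dist_eq, abs_of_nonneg (sub_nonneg.2 hle)]
    linarith [min_le_left ε x]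

theorem Icc_mul_subset_of_Icc_subset {S : Set ℝ} (hadd : ∀ a ∈ S, ∀ b ∈ S, a + b ∈ S)
    {a b : ℝ} (h : Icc a b ⊆ S) {n : ℕ} (hn : n ≠ 0) :
    Icc (n * a) (n * b) ⊆ S := by
  intro y ⟨hay, hyb⟩
  have hn0 : (0 : ℝ) < n := by positivity
  have hy : y / n ∈ Icc a b := ⟨(le_div_iff₀' hn0).2 hay, (div_le_iff₀' hn0).2 hyb⟩
  simpa [nsmul_eq_mul, mul_div_cancel₀ y hn0.ne'] using nsmul_mem_of_add_mem hadd (h hy) hn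

/-- For `y ≥ a b / (b - a)`, the `n = ⌊y / a⌋` with `n a ≤ y < (n + 1) a` satisfies
`n (b - a) > a`, hence `y ≤ n b`. -/
theorem Ici_subset_of_Icc_subset {S : Set ℝ} (hadd : ∀ a ∈ S, ∀ b ∈ S, a + b ∈ S)
    {a b : ℝ} (ha : 0 < a) (hab : a < b) (h : Icc a b ⊆ S) :
    Ici (a * b / (b - a)) ⊆ S := by
  intro y (hy : a * b / (b - a) ≤ y)
  have hba : 0 < b - a := sub_pos.2 hab
  have hay : a < y := by
    refine lt_of_lt_of_le ?_ hy
    rw [lt_div_iff₀ hba]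
    nlinarith
  obtain ⟨n, hlt, hle⟩ := exists_nat_mul_mem_Ioc ha (ha.trans hay).le
  have hn : n ≠ 0 := by
    rintro rfl
    rw [Nat.cast_zero, zero_mul] at hlt
    linarith
  refine Icc_mul_subset_of_Icc_subset hadd h hn ⟨hle, ?_⟩
  rw [div_le_iff₀ hba] at hy
  nlinarith

theorem exists_Icc_subset_of_interior_nonempty {α : Type*} [LinearOrder α]
    [TopologicalSpace α] [OrderTopology α] [DenselyOrdered α] [Nontrivial α] {S : Set α}
    (h : (interior S).Nonempty) : ∃ a b, a < b ∧ Icc a b ⊆ S := by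
  obtain ⟨l, u, hlu, hsub⟩ := isOpen_interior.exists_Ioo_subset h
  obtain ⟨a, hla, hau⟩ := exists_between hlu
  obtain ⟨b, hab, hbu⟩ := exists_between hau
  exact ⟨a, b, hab, (Icc_subset_Ioo hla hbu).trans (hsub.trans interior_subset)⟩

theorem closed_semigroup_structure_general
    (S : Set ℝ) (hS : S ⊆ Set.Ioi 0)
    (hadd : ∀ a ∈ S, ∀ b ∈ S, a + b ∈ S)
    (hclosed : ∀ x : ℝ, 0 < x → x ∈ closure S → x ∈ S) :
    (S = Set.Ioi 0 ∨ ∃ lam : ℝ, 0 < lam ∧ S ⊆ Set.Ici lam) ∧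
    ((interior S).Nonempty → ∃ lam : ℝ, 0 < lam ∧ Set.Ici lam ⊆ S) := by
  refine ⟨?_, fun hint => ?_⟩
  · by_cases hgap : ∃ lam : ℝ, 0 < lam ∧ S ⊆ Ici lam
    · exact Or.inr hgap
    push Not at hgap
    have hsmall : ∀ ε > 0, (S ∩ Ioo 0 ε).Nonempty := fun ε hε => by
      obtain ⟨s, hs, hsε⟩ := not_subset.1 (hgap ε hε)
      exact ⟨s, hs, hS hs, not_le.1 hsε⟩
    exact Or.inl <| hS.antisymm fun x hx =>
      hclosed x hx (Ioi_subset_closure_of_forall_nonempty_inter_Ioo hadd hsmall hx)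
  · obtain ⟨a, b, hab, hsub⟩ := exists_Icc_subset_of_interior_nonempty hint
    have ha : 0 < a := hS (hsub (left_mem_Icc.2 hab.le))
    exact ⟨a * b / (b - a), div_pos (mul_pos ha (ha.trans hab)) (sub_pos.2 hab),
      Ici_subset_of_Icc_subset hadd ha hab hsub⟩

/-- Proposition 4.2: a closed additive subsemigroup `S` of `(0,∞)` containing
`1` is either all of `(0,∞)` or is contained in some `[λ,∞)`; and if `S` has
nonempty interior then `S` contains some `[λ,∞)`. -/
theorem closed_semigroup_structure
    (S : Set ℝ) (hS : S ⊆ Set.Ioi 0) (h1 : (1 : ℝ) ∈ S)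
    (hadd : ∀ a ∈ S, ∀ b ∈ S, a + b ∈ S)
    (hclosed : ∀ x : ℝ, 0 < x → x ∈ closure S → x ∈ S) :
    (S = Set.Ioi 0 ∨ ∃ lam : ℝ, 0 < lam ∧ S ⊆ Set.Ici lam) ∧
    ((interior S).Nonempty → ∃ lam : ℝ, 0 < lam ∧ Set.Ici lam ⊆ S) :=
  closed_semigroup_structure_general S hS hadd hclosed
end
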